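/- arXiv:0809.1072 — 6 statements merged into one kernel-verified Lean document; each statement's English description precedes it below -/
import Mathlib

section
/- Let k ≥ 1 be an integer and ρ = (k+1)^(1/k). With P = min{2, (k+1)²(log ρ)²/((k+1)²(log ρ)² − 1)}, for every integer i with 2 ≤ i ≤ k one has (i − 1 + (k − i + 2)^P)/(k+1) < (ρ^(P−1))^(k−i+1). -/
open Real Set

-- log x < (x-1)/sqrt x  for x > 1
lemma aux_log_lt {x : ℝ} (hx : 1 < x) : Real.log x < (x - 1) / Real.sqrt x := by
  have hx0 : (0:ℝ) < x := by linarith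
  have hs1 : (1:ℝ) < Real.sqrt x := by
    have := Real.sqrt_lt_sqrt (by norm_num : (0:ℝ) ≤ 1) hx
    simpa using this
  have hs0 : (0:ℝ) < Real.sqrt x := by linarith
  have hu : 0 < Real.log (Real.sqrt x) := Real.log_pos hs1
  have h1 : Real.log (Real.sqrt x) < Real.sinh (Real.log (Real.sqrt x)) :=
    Real.self_lt_sinh_iff.2 hu
  have h2 : Real.sinh (Real.log (Real.sqrt x)) = (Real.sqrt x - (Real.sqrt x)⁻¹) / 2 := by
    rw [Real.sinh_eq, Real.exp_log hs0, ← Real.log_inv, Real.exp_log (by positivity)]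
  have h3 : Real.log (Real.sqrt x) = Real.log x / 2 := Real.log_sqrt hx0.le
  have hsq : Real.sqrt x * Real.sqrt x = x := Real.mul_self_sqrt hx0.le
  rw [h3] at h1 h2
  rw [h2] at h1
  rw [lt_div_iff₀ hs0]
  have hinv : (Real.sqrt x)⁻¹ = Real.sqrt x / x := by
    field_simp; rw [sq, hsq]
  rw [hinv] at h1
  have := mul_lt_mul_of_pos_right h1 hs0
  have hd : Real.sqrt x / x * Real.sqrt x = 1 := by
    field_simp; rw [sq, hsq]
  nlinarith

lemma aux_log5 : (3:ℝ)/2 < Real.log 5 := by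
  rw [Real.lt_log_iff_exp_lt (by norm_num : (0:ℝ) < 5)]
  have h1 : Real.exp 1 < 2.7182818286 := Real.exp_one_lt_d9
  have h3 : Real.exp 3 < 21 := by
    have : Real.exp 3 = Real.exp 1 ^ 3 := by
      rw [← Real.exp_nat_mul]; norm_num
    rw [this]
    have h2 : Real.exp 1 ^ 3 < 2.7182818286 ^ 3 :=
      pow_lt_pow_left₀ h1 (Real.exp_pos 1).le (by norm_num)
    nlinarith
  have he : Real.exp (3/2) * Real.exp (3/2) = Real.exp 3 := by
    rw [← Real.exp_add]; norm_num
  nlinarith [Real.exp_pos (3/2 : ℝ)]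

set_option maxHeartbeats 1000000 in
theorem stmt_3 (k : ℕ) (hk : 1 ≤ k) :
    let ρ : ℝ := ((k : ℝ) + 1) ^ ((1 : ℝ) / k)
    let P : ℝ := min 2 (((k : ℝ) + 1) ^ 2 * Real.log ρ ^ 2 /
      (((k : ℝ) + 1) ^ 2 * Real.log ρ ^ 2 - 1))
    ∀ i : ℕ, 2 ≤ i → i ≤ k →
      ((i : ℝ) - 1 + ((k : ℝ) - i + 2) ^ P) / ((k : ℝ) + 1) <
        (ρ ^ (P - 1)) ^ ((k : ℝ) - i + 1) := by
  intro ρ P i hi2 hik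
  have hk2 : 2 ≤ k := hi2.trans hik
  set K : ℝ := (k : ℝ) with hKdef
  have hK2 : (2:ℝ) ≤ K := by rw [hKdef]; exact_mod_cast hk2
  have hK0 : (0:ℝ) < K := by linarith
  set N : ℝ := K + 1 with hNdef
  have hN3 : (3:ℝ) ≤ N := by linarith
  have hN0 : (0:ℝ) < N := by linarith
  set L : ℝ := Real.log N with hLdef
  have hL1 : 1 < L := by
    have he : Real.exp 1 < 3 := by
      have := Real.exp_one_lt_d9; linarith
    calc (1:ℝ) = Real.log (Real.exp 1) := (Real.log_exp 1).symm
      _ < Real.log N := Real.log_lt_log (Real.exp_pos 1) (lt_of_lt_of_le he hN3)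
  have hL0 : 0 < L := by linarith
  have hρ : ρ = N ^ ((1:ℝ)/K) := rfl
  have hlogρ : Real.log ρ = L / K := by
    rw [hρ, Real.log_rpow hN0, one_div, inv_mul_eq_div]
  set A : ℝ := N * L / K with hAdef
  have hA1 : 1 < A := by
    rw [hAdef, lt_div_iff₀ hK0]
    nlinarith
  have hA0 : 0 < A := by linarith
  have hA2 : 2 < A ^ 2 := by
    rcases Nat.lt_or_ge k 4 with h4 | h4
    · have : k = 2 ∨ k = 3 := by omega
      rcases this with hke | hke
      · have hKv : K = 2 := by rw [hKdef, hke]; norm_num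
        have hNv : N = 3 := by rw [hNdef, hKv]; norm_num
        have hAv : A = 3 * L / 2 := by rw [hAdef, hKv, hNv]
        rw [hAv]
        nlinarith
      · have hKv : K = 3 := by rw [hKdef, hke]; norm_num
        have hNv : N = 4 := by rw [hNdef, hKv]; norm_num
        have hL4 : (1.3862943606:ℝ) < L := by
          rw [hLdef, hNv, show (4:ℝ) = 2^2 by norm_num, Real.log_pow]
          push_cast
          nlinarith [Real.log_two_gt_d9]
        have hAv : A = 4 * L / 3 := by rw [hAdef, hKv, hNv]
        rw [hAv]
        nlinarith
    · have hK4 : (4:ℝ) ≤ K := by rw [hKdef]; exact_mod_cast h4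
      have hN5 : (5:ℝ) ≤ N := by linarith
      have hL5 : (3:ℝ)/2 < L := by
        calc (3:ℝ)/2 < Real.log 5 := aux_log5
          _ ≤ L := Real.log_le_log (by norm_num) hN5
      have hAL : L < A := by
        rw [hAdef, lt_div_iff₀ hK0]
        nlinarith
      nlinarith
  have hA21 : 1 < A^2 - 1 := by linarith
  set t : ℝ := 1 / (A^2 - 1) with htdef
  have ht0 : 0 < t := by positivity
  have ht1 : t < 1 := by
    rw [htdef, div_lt_one (by linarith)]; linarith
  have hPdef : P = 1 + t := by
    have hq : N^2 * Real.log ρ^2 = A^2 := by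
      rw [hlogρ, hAdef]
      field_simp
    have : P = min 2 (A^2 / (A^2 - 1)) := by
      show min 2 (N^2 * Real.log ρ^2 / (N^2 * Real.log ρ^2 - 1)) = _
      rw [hq]
    rw [this, min_eq_right, htdef]
    · field_simp; ring
    · rw [div_le_iff₀ (by linarith)]; nlinarith
  have hP1 : 1 ≤ P := by rw [hPdef]; linarith
  set c : ℝ := t * L / K with hcdef
  have hc0 : 0 < c := by positivity
  have hcK : c * K = t * L := by rw [hcdef]; field_simp
  have hcN : c * N = t * A := by rw [hcdef, hAdef]; field_simp
  clear_value K N L A t c ρ P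
  -- key numeric inequality
  have hkey : (A + 1) / A < N ^ t := by
    have hNL : N * L^2 < K^2 := by
      have h := aux_log_lt (show (1:ℝ) < N by linarith)
      have hsN : 0 < Real.sqrt N := Real.sqrt_pos.2 hN0
      have hsq : Real.sqrt N * Real.sqrt N = N := Real.mul_self_sqrt hN0.le
      have h2 : L * Real.sqrt N < K := by
        rw [hLdef]
        calc Real.log N * Real.sqrt N < (N - 1) / Real.sqrt N * Real.sqrt N := by
              exact mul_lt_mul_of_pos_right h hsN
          _ = K := by rw [hNdef]; field_simp; ring
      have h3 : (L * Real.sqrt N) * (L * Real.sqrt N) < K * K :=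
        mul_self_lt_mul_self (by positivity) h2
      nlinarith
    have h1A : 1/A ≤ t * L := by
      have hexp : A^2 - A*L = N*L^2/K^2 := by rw [hAdef, hNdef]; field_simp; ring
      have h5 : A^2 - A*L < 1 := by
        rw [hexp, div_lt_one (by positivity)]
        exact hNL
      rw [htdef, div_mul_eq_mul_div, one_mul, div_le_div_iff₀ hA0 (by linarith)]
      nlinarith
    have hlog : Real.log ((A+1)/A) < 1/A := by
      have h0 : (0:ℝ) < (A+1)/A := by positivity
      have hgt : (1:ℝ) < (A+1)/A := by
        rw [lt_div_iff₀ hA0]; linarith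
      have h6 := Real.log_lt_sub_one_of_pos h0 (ne_of_gt hgt)
      have h7 : (A+1)/A - 1 = 1/A := by field_simp; ring
      linarith
    rw [Real.lt_rpow_iff_log_lt (by positivity) hN0, ← hLdef]
    linarith
  -- the functions
  set Φ : ℝ → ℝ := fun u => (N - u + u ^ P) * Real.exp (-(c * (u - 1))) with hΦdef
  set ψ : ℝ → ℝ := fun u => P * u ^ t - 1 - c * (N - u) - c * u ^ P with hψdef
  have hPt : P - 1 = t := by rw [hPdef]; ring
  have hderiv : ∀ u : ℝ, 0 < u → HasDerivAt Φ (ψ u * Real.exp (-(c * (u - 1)))) u := by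
    intro u hu
    have h1 : HasDerivAt (fun x : ℝ => x ^ P) (P * u ^ (P - 1)) u :=
      Real.hasDerivAt_rpow_const (Or.inl (ne_of_gt hu))
    rw [hPt] at h1
    have h2 : HasDerivAt (fun x : ℝ => N - x + x ^ P) (-1 + P * u ^ t) u := by
      have h0 : HasDerivAt (fun x : ℝ => N - x) (-1 : ℝ) u := by
        simpa using (hasDerivAt_id u).const_sub N
      exact h0.add h1
    have h3 : HasDerivAt (fun x : ℝ => Real.exp (-(c * (x - 1))))
        (-c * Real.exp (-(c * (u - 1)))) u := by
      have hlin : HasDerivAt (fun x : ℝ => -(c * (x - 1))) (-c) u := by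
        exact (((hasDerivAt_id u).sub_const 1).const_mul c).neg.congr_deriv (by simp)
      simpa [mul_comm] using hlin.exp
    have h4 := h2.mul h3
    rw [hΦdef, hψdef]
    refine h4.congr_deriv ?_
    ring
  have hψconc : ConcaveOn ℝ (Ici (0:ℝ)) ψ := by
    have hP0 : (0:ℝ) ≤ P := by linarith
    have c1 : ConcaveOn ℝ (Ici (0:ℝ)) (fun u : ℝ => P * u ^ t) := by
      have := (Real.concaveOn_rpow ht0.le ht1.le).smul hP0
      simpa [smul_eq_mul] using this
    have c2 : ConcaveOn ℝ (Ici (0:ℝ)) (fun u : ℝ => -(c * u ^ P)) := by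
      have := ((convexOn_rpow hP1).smul hc0.le).neg
      simpa [smul_eq_mul, Pi.neg_def] using this
    have c3 : ConcaveOn ℝ (Ici (0:ℝ)) (fun u : ℝ => -1 - c * (N - u)) := by
      refine ⟨convex_Ici 0, ?_⟩
      intro x _ y _ a b ha hb hab
      simp only [smul_eq_mul]
      linear_combination (-1 - c * N) * hab
    have hsum := (c1.add c3).add c2
    have heq : ψ = fun u : ℝ => (P * u ^ t + (-1 - c * (N - u))) + -(c * u ^ P) := by
      funext v
      rw [hψdef]
      ring
    rw [heq]
    exact hsum
  have hΦ1 : Φ 1 = N := by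
    simp [hΦdef, Real.one_rpow]
  have hΦN : Φ N = N := by
    have hNK : N - 1 = K := by rw [hNdef]; ring
    have h3 : Real.exp (-(t * Real.log N)) = N ^ (-t) := by
      rw [Real.rpow_def_of_pos hN0]
      ring_nf
    rw [hΦdef]
    simp only
    rw [hNK, hcK, hLdef, h3, show N - N + N ^ P = N ^ P by ring,
      ← Real.rpow_add hN0, hPdef, show 1 + t + -t = (1:ℝ) by ring, Real.rpow_one]
  have hψ1 : ψ 1 < 0 := by
    rw [hψdef]
    simp only [Real.one_rpow]
    rw [hPdef]
    nlinarith [hcN, mul_pos ht0 (show (0:ℝ) < A - 1 by linarith)]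
  have hψN : 0 < ψ N := by
    have hX : 0 < N ^ t := Real.rpow_pos_of_pos hN0 t
    have e1 : N ^ P = N * N ^ t := by rw [hPdef, Real.rpow_add hN0, Real.rpow_one]
    have hs : (1 + t - t * A) * (A + 1) = A := by
      rw [htdef]; field_simp; ring
    have h4 : A + 1 < N ^ t * A := by
      rw [div_lt_iff₀ hA0] at hkey; linarith
    have h5 : (N ^ t * (1 + t - t * A) - 1) * (A + 1) = N ^ t * A - (A + 1) := by
      linear_combination (N ^ t) * hs
    have h6 : 0 < N ^ t * (1 + t - t * A) - 1 := by nlinarith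
    rw [hψdef]
    simp only
    rw [e1, hPdef]
    nlinarith [hcN, hX]
  -- setup for u
  set u : ℝ := K - i + 2 with hudef
  have hiK : (i:ℝ) ≤ K := by rw [hKdef]; exact_mod_cast hik
  have hi2' : (2:ℝ) ≤ (i:ℝ) := by exact_mod_cast hi2
  have hu2 : 2 ≤ u := by rw [hudef]; linarith
  have huK : u ≤ K := by rw [hudef]; linarith
  have hu1 : 1 < u := by linarith
  have huN : u < N := by linarith
  have hcont : ContinuousOn Φ (Ici (1:ℝ)) := fun x hx =>
    ((hderiv x (by simp at hx; linarith)).continuousAt).continuousWithinAt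
  -- main inequality
  have hΦu : Φ u < N := by
    by_cases hcase : ψ u ≤ 0
    · have hanti : StrictAntiOn Φ (Icc 1 u) := by
        apply strictAntiOn_of_deriv_neg (convex_Icc 1 u)
          (hcont.mono (Icc_subset_Ici_self))
        intro x hx
        rw [interior_Icc] at hx
        obtain ⟨hx1, hxu⟩ := hx
        have hx0 : (0:ℝ) < x := by linarith
        have hψx : ψ x < 0 := by
          have hd0 : 0 < N - x := by linarith
          set a : ℝ := (N - u)/(N - x) with hadef
          set b : ℝ := (u - x)/(N - x) with hbdef
          have ha : 0 < a := div_pos (by linarith) hd0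
          have hb : 0 < b := div_pos (by linarith) hd0
          have hab : a + b = 1 := by rw [hadef, hbdef]; field_simp; ring
          have hcomb : a * x + b * N = u := by
            rw [hadef, hbdef]; field_simp; ring
          have hcc := hψconc.2 (show x ∈ Ici (0:ℝ) by simp; linarith)
            (show N ∈ Ici (0:ℝ) by simp; linarith) ha.le hb.le hab
          simp only [smul_eq_mul] at hcc
          rw [hcomb] at hcc
          by_contra hge
          push_neg at hge
          linarith [mul_nonneg ha.le hge, mul_pos hb hψN]
        rw [(hderiv x hx0).deriv]
        exact mul_neg_of_neg_of_pos hψx (Real.exp_pos _)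
      have h := hanti (left_mem_Icc.2 hu1.le) (right_mem_Icc.2 hu1.le) hu1
      rw [hΦ1] at h
      exact h
    · push_neg at hcase
      have hmono : StrictMonoOn Φ (Icc u N) := by
        apply strictMonoOn_of_deriv_pos (convex_Icc u N)
          (hcont.mono (Icc_subset_Ici_self.trans (Ici_subset_Ici.2 (by linarith))))
        intro x hx
        rw [interior_Icc] at hx
        obtain ⟨hxu, hxN⟩ := hx
        have hx0 : (0:ℝ) < x := by linarith
        have hψx : 0 < ψ x := by
          have hd0 : 0 < N - u := by linarith
          set a : ℝ := (N - x)/(N - u) with hadef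
          set b : ℝ := (x - u)/(N - u) with hbdef
          have ha : 0 < a := div_pos (by linarith) hd0
          have hb : 0 < b := div_pos (by linarith) hd0
          have hab : a + b = 1 := by rw [hadef, hbdef]; field_simp; ring
          have hcomb : a * u + b * N = x := by
            rw [hadef, hbdef]; field_simp; ring
          have hcc := hψconc.2 (show u ∈ Ici (0:ℝ) by simp; linarith)
            (show N ∈ Ici (0:ℝ) by simp; linarith) ha.le hb.le hab
          simp only [smul_eq_mul] at hcc
          rw [hcomb] at hcc
          linarith [mul_pos ha hcase, mul_pos hb hψN]
        rw [(hderiv x hx0).deriv]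
        exact mul_pos hψx (Real.exp_pos _)
      have h := hmono (left_mem_Icc.2 huN.le) (right_mem_Icc.2 huN.le) huN
      rw [hΦN] at h
      exact h
  -- convert to goal
  have hE : (ρ ^ (P - 1)) ^ (K - (i:ℝ) + 1) = Real.exp (c * (u - 1)) := by
    rw [hρ, hPt, ← Real.rpow_mul hN0.le, ← Real.rpow_mul hN0.le,
      Real.rpow_def_of_pos hN0, ← hLdef]
    congr 1
    rw [hcdef, hudef]
    field_simp
    ring
  have hIU : (i:ℝ) - 1 = N - u := by rw [hudef, hNdef]; ring
  have hprod : (N - u + u ^ P) = Φ u * Real.exp (c * (u - 1)) := by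
    rw [hΦdef]
    simp only
    rw [mul_assoc, ← Real.exp_add]
    simp
  rw [hE, hIU, div_lt_iff₀ hN0, hprod]
  calc Φ u * Real.exp (c*(u-1)) < N * Real.exp (c*(u-1)) :=
        mul_lt_mul_of_pos_right hΦu (Real.exp_pos _)
    _ = Real.exp (c*(u-1)) * N := mul_comm _ _
end

section
/- If a and b are coprime positive integers, then L^(k+1)(ab) ≤ τ_{k+1}(a)·L^(k+1)(b). -/
/-- number of `k`-tuples `(d₁,…,d_k)` of positive integers with `d₁⋯d_k ∣ a` -/
def tauk (k a : ℕ) : ℕ :=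
  ((Fintype.piFinset fun _ : Fin k => a.divisors).filter fun d => (∏ i, d i) ∣ a).card

/-- `L^{(k+1)}(a)`: the Lebesgue measure of `⋃_{d₁⋯d_k ∣ a} ∏ᵢ [log(dᵢ/2), log dᵢ)` -/
noncomputable def Lk (k a : ℕ) : ℝ :=
  (MeasureTheory.volume (⋃ d ∈ {d : Fin k → ℕ | (∏ i, d i) ∣ a},
    Set.univ.pi fun i => Set.Ico (Real.log ((d i : ℝ) / 2)) (Real.log (d i)))).toReal

open MeasureTheory in
/-- The union set whose volume is `Lk`. -/
noncomputable def Uset (k n : ℕ) : Set (Fin k → ℝ) :=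
  ⋃ d ∈ {d : Fin k → ℕ | (∏ i, d i) ∣ n},
    Set.univ.pi fun i => Set.Ico (Real.log ((d i : ℝ) / 2)) (Real.log (d i))

lemma Lk_eq (k n : ℕ) : Lk k n = (MeasureTheory.volume (Uset k n)).toReal := rfl

lemma Uset_vol_ne_top (k n : ℕ) (hn : 0 < n) :
    MeasureTheory.volume (Uset k n) ≠ ⊤ := by
  have hsub : Uset k n ⊆ Set.univ.pi fun _ : Fin k =>
      Set.Ico (Real.log ((1 : ℝ) / 2)) (Real.log n) := by
    intro x hx
    simp only [Uset, Set.mem_iUnion] at hx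
    obtain ⟨d, hd, hx⟩ := hx
    have hd' : (∏ i, d i) ∣ n := hd
    have hdpos : ∀ i, 0 < d i := by
      intro i
      rcases Nat.eq_zero_or_pos (d i) with h | h
      · exfalso
        have hz : (∏ i, d i) = 0 := Finset.prod_eq_zero (Finset.mem_univ i) h
        rw [hz] at hd'
        exact hn.ne' (Nat.eq_zero_of_zero_dvd hd')
      · exact h
    intro i _
    have hxi := hx i (Set.mem_univ i)
    have hdi : d i ∣ n := (Finset.dvd_prod_of_mem d (Finset.mem_univ i)).trans hd'
    have h1 : (1 : ℝ) ≤ d i := by exact_mod_cast hdpos i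
    have h2 : (d i : ℝ) ≤ n := by exact_mod_cast Nat.le_of_dvd hn hdi
    constructor
    · refine le_trans (Real.log_le_log (by norm_num) (by linarith)) hxi.1
    · exact lt_of_lt_of_le hxi.2 (Real.log_le_log (by exact_mod_cast hdpos i) h2)
  refine ne_top_of_le_ne_top ?_ (MeasureTheory.measure_mono hsub)
  rw [MeasureTheory.volume_pi_pi]
  simp [Real.volume_Ico, ENNReal.prod_ne_top]

theorem stmt_6 (k a b : ℕ) (hk : 1 ≤ k) (ha : 0 < a) (hb : 0 < b)
    (hab : Nat.Coprime a b) :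
    Lk k (a * b) ≤ (tauk k a : ℝ) * Lk k b := by
  classical
  set S := ((Fintype.piFinset fun _ : Fin k => a.divisors).filter fun d => (∏ i, d i) ∣ a)
    with hSdef
  -- main inclusion
  have hsub : Uset k (a * b) ⊆
      ⋃ e ∈ S, (fun x => (fun i => -Real.log (e i)) + x) ⁻¹' Uset k b := by
    intro x hx
    simp only [Uset, Set.mem_iUnion, Set.mem_setOf_eq] at hx
    obtain ⟨d, hd, hx⟩ := hx
    have hdpos : ∀ i, 0 < d i := by
      intro i
      rcases Nat.eq_zero_or_pos (d i) with h | h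
      · exfalso
        have : (∏ i, d i) = 0 := Finset.prod_eq_zero (Finset.mem_univ i) h
        rw [this] at hd
        exact (Nat.mul_pos ha hb).ne' (Nat.eq_zero_of_zero_dvd hd)
      · exact h
    set e : Fin k → ℕ := fun i => Nat.gcd (d i) a with he
    set f : Fin k → ℕ := fun i => Nat.gcd (d i) b with hf
    have hef : ∀ i, e i * f i = d i := by
      intro i
      have hdi : d i ∣ a * b := (Finset.dvd_prod_of_mem d (Finset.mem_univ i)).trans hd
      exact (Nat.gcd_mul_gcd_eq_iff_dvd_mul_of_coprime hab).mpr hdi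
    have hepos : ∀ i, 0 < e i := fun i => Nat.pos_of_ne_zero
      (fun h => ha.ne' (Nat.eq_zero_of_gcd_eq_zero_right h))
    have hfpos : ∀ i, 0 < f i := fun i => Nat.pos_of_ne_zero
      (fun h => hb.ne' (Nat.eq_zero_of_gcd_eq_zero_right h))
    have hea : ∀ i, e i ∣ a := fun i => Nat.gcd_dvd_right _ _
    have hfb : ∀ i, f i ∣ b := fun i => Nat.gcd_dvd_right _ _
    have hprodsplit : (∏ i, e i) * ∏ i, f i = ∏ i, d i := by
      rw [← Finset.prod_mul_distrib]; exact Finset.prod_congr rfl fun i _ => hef i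
    have hpe : (∏ i, e i) ∣ a := by
      have hcop : Nat.Coprime (∏ i, e i) b :=
        Nat.Coprime.prod_left fun i _ => (Nat.Coprime.coprime_dvd_left (hea i) hab)
      refine hcop.dvd_of_dvd_mul_right ?_
      calc (∏ i, e i) ∣ ∏ i, d i := hprodsplit ▸ Dvd.intro _ rfl
        _ ∣ a * b := hd
    have hpf : (∏ i, f i) ∣ b := by
      have hcop : Nat.Coprime (∏ i, f i) a :=
        Nat.Coprime.prod_left fun i _ => (Nat.Coprime.coprime_dvd_left (hfb i) hab.symm)
      refine hcop.dvd_of_dvd_mul_right ?_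
      calc (∏ i, f i) ∣ ∏ i, d i := hprodsplit ▸ Dvd.intro_left _ rfl
        _ ∣ b * a := (Nat.mul_comm a b) ▸ hd
    have heS : e ∈ S := by
      rw [hSdef, Finset.mem_filter]
      refine ⟨Fintype.mem_piFinset.mpr fun i => Nat.mem_divisors.mpr ⟨hea i, ha.ne'⟩, hpe⟩
    simp only [Set.mem_iUnion]
    refine ⟨e, heS, ?_⟩
    simp only [Set.mem_preimage, Uset, Set.mem_iUnion, Set.mem_setOf_eq]
    refine ⟨f, hpf, ?_⟩
    intro i _
    have hxi := hx i (Set.mem_univ i)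
    have hepos' : (0 : ℝ) < e i := by exact_mod_cast hepos i
    have hfpos' : (0 : ℝ) < f i := by exact_mod_cast hfpos i
    have hdi : (d i : ℝ) = (e i : ℝ) * f i := by exact_mod_cast (hef i).symm
    have hlog1 : Real.log (d i) = Real.log (e i) + Real.log (f i) := by
      rw [hdi, Real.log_mul hepos'.ne' hfpos'.ne']
    have hlog2 : Real.log ((d i : ℝ) / 2) = Real.log (e i) + Real.log ((f i : ℝ) / 2) := by
      rw [hdi, mul_div_assoc, Real.log_mul hepos'.ne' (by positivity)]
    simp only [Pi.add_apply]
    constructor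
    · have := hxi.1
      rw [hlog2] at this
      linarith
    · have := hxi.2
      rw [hlog1] at this
      linarith
  -- volume bound
  have hmeas : MeasureTheory.volume (Uset k (a * b)) ≤
      (S.card : ENNReal) * MeasureTheory.volume (Uset k b) := by
    calc MeasureTheory.volume (Uset k (a * b))
        ≤ MeasureTheory.volume (⋃ e ∈ S, (fun x => (fun i => -Real.log (e i)) + x) ⁻¹' Uset k b) :=
          MeasureTheory.measure_mono hsub
      _ ≤ ∑ e ∈ S, MeasureTheory.volume ((fun x => (fun i => -Real.log (e i)) + x) ⁻¹' Uset k b) :=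
          MeasureTheory.measure_biUnion_finset_le S _
      _ = ∑ e ∈ S, MeasureTheory.volume (Uset k b) := by
          refine Finset.sum_congr rfl fun e _ => ?_
          exact MeasureTheory.measure_preimage_add _ _ _
      _ = (S.card : ENNReal) * MeasureTheory.volume (Uset k b) := by
          rw [Finset.sum_const, nsmul_eq_mul]
  have hfin : MeasureTheory.volume (Uset k b) ≠ ⊤ := Uset_vol_ne_top k b hb
  have htauk : tauk k a = S.card := rfl
  rw [Lk_eq, Lk_eq, htauk]
  calc (MeasureTheory.volume (Uset k (a * b))).toReal
      ≤ ((S.card : ENNReal) * MeasureTheory.volume (Uset k b)).toReal := by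
        refine ENNReal.toReal_mono ?_ hmeas
        exact ENNReal.mul_ne_top (ENNReal.natCast_ne_top _) hfin
    _ = (S.card : ℝ) * (MeasureTheory.volume (Uset k b)).toReal := by
        rw [ENNReal.toReal_mul]; simp
end

section
/- If p₁ < p₂ < ⋯ < p_m are distinct primes, then for every j with 1 ≤ j ≤ m, L^(k+1)(p₁⋯p_m) ≤ (k+1)^{m−j}·(log(p₁⋯p_j) + log 2)^k. -/
open MeasureTheory
open scoped ENNReal

lemma squarefree_prod_primes {m : ℕ} {p : Fin m → ℕ} (hp : ∀ i, (p i).Prime)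
    (hinj : Function.Injective p) (s : Finset (Fin m)) : Squarefree (∏ i ∈ s, p i) := by
  classical
  induction s using Finset.cons_induction with
  | empty => simpa using squarefree_one
  | cons a s ha ih =>
    rw [Finset.prod_cons]
    refine (Nat.squarefree_mul ?_).mpr ⟨(hp a).prime.squarefree, ih⟩
    refine ((hp a).coprime_iff_not_dvd).mpr ?_
    intro hdvd
    obtain ⟨i, hi, hdvd⟩ := ((hp a).prime.dvd_finset_prod_iff _).mp hdvd
    have : p a = p i := ((Nat.prime_dvd_prime_iff_eq (hp a) (hp i)).mp hdvd)
    exact ha (hinj this ▸ hi)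

theorem stmt_7 (k m : ℕ) (hk : 1 ≤ k) (p : Fin m → ℕ)
    (hp : ∀ i, (p i).Prime) (hmono : StrictMono p)
    (j : ℕ) (hj1 : 1 ≤ j) (hjm : j ≤ m) :
    Lk k (∏ i, p i) ≤ ((k : ℝ) + 1) ^ (m - j) *
      (Real.log ((∏ i ∈ Finset.univ.filter fun i : Fin m => (i : ℕ) < j, p i : ℕ) : ℝ)
        + Real.log 2) ^ k := by
  classical
  set n : ℕ := ∏ i, p i with hn
  set a : ℕ := ∏ i ∈ Finset.univ.filter fun i : Fin m => (i : ℕ) < j, p i with ha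
  have hinj : Function.Injective p := hmono.injective
  have hsqn : Squarefree n := squarefree_prod_primes hp hinj _
  have hn0 : 0 < n := Finset.prod_pos fun i _ => (hp i).pos
  have ha1 : 1 ≤ a := Finset.one_le_prod' fun i _ => (hp i).one_lt.le
  have hA0 : 0 ≤ Real.log a + Real.log 2 := by
    have h1 : (0:ℝ) ≤ Real.log a := Real.log_nonneg (by exact_mod_cast ha1)
    have h2 : (0:ℝ) ≤ Real.log 2 := Real.log_nonneg (by norm_num)
    linarith
  set A : ℝ := Real.log a + Real.log 2 with hA
  -- embedding of the "large" primes
  have hι : ∀ t : Fin (m - j), j + (t : ℕ) < m := fun t => by omega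
  set ι : Fin (m - j) → Fin m := fun t => ⟨j + t, hι t⟩ with hιdef
  have hιinj : Function.Injective ι := by
    intro t1 t2 h
    simp only [hιdef, Fin.mk.injEq] at h
    exact Fin.ext (by omega)
  set Φ : (Fin (m - j) → Fin (k + 1)) → Fin k → ℕ :=
    fun g i => ∏ t ∈ Finset.univ.filter fun t => ((g t : ℕ) = (i : ℕ)), p (ι t) with hΦ
  have hΦpos : ∀ g i, 0 < Φ g i := fun g i => Finset.prod_pos fun t _ => (hp (ι t)).pos
  -- main set inclusion
  have hsub : (⋃ d ∈ {d : Fin k → ℕ | (∏ i, d i) ∣ n},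
      Set.univ.pi fun i => Set.Ico (Real.log ((d i : ℝ) / 2)) (Real.log (d i))) ⊆
      ⋃ g : Fin (m - j) → Fin (k + 1),
        Set.univ.pi fun i => Set.Ico (Real.log (Φ g i) - Real.log 2)
          (Real.log (Φ g i) + Real.log a) := by
    intro x hx
    simp only [Set.mem_iUnion, Set.mem_setOf_eq] at hx ⊢
    obtain ⟨d, hd, hxd⟩ := hx
    have hdi : ∀ i, d i ∣ n := fun i => (Finset.dvd_prod_of_mem d (Finset.mem_univ i)).trans hd
    have hd1 : ∀ i, 1 ≤ d i := fun i => Nat.pos_of_dvd_of_pos (hdi i) hn0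
    -- uniqueness of the position a given prime divides
    have huniq : ∀ s : Fin m, ∀ i i' : Fin k, p s ∣ d i → p s ∣ d i' → i = i' := by
      intro s i i' h1 h2
      by_contra hne
      have hdd : d i * d i' ∣ n := by
        refine dvd_trans ?_ hd
        have : ∏ x ∈ ({i, i'} : Finset (Fin k)), d x ∣ ∏ x, d x :=
          Finset.prod_dvd_prod_of_subset _ _ _ (Finset.subset_univ _)
        rwa [Finset.prod_pair hne] at this
      have : p s * p s ∣ n := dvd_trans (mul_dvd_mul h1 h2) hdd
      exact (hp s).one_lt.ne' (Nat.isUnit_iff.mp (hsqn _ this))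
    -- the assignment of large primes to coordinates
    set g : Fin (m - j) → Fin (k + 1) := fun t =>
      if h : ∃ i : Fin k, p (ι t) ∣ d i then (h.choose).castSucc else Fin.last k with hg
    refine ⟨g, ?_⟩
    -- if g t = i (as naturals, i < k) then p (ι t) ∣ d i
    have hgdvd : ∀ (t : Fin (m - j)) (i : Fin k), ((g t : ℕ) = (i : ℕ)) → p (ι t) ∣ d i := by
      intro t i hgt
      by_cases h : ∃ i' : Fin k, p (ι t) ∣ d i'
      · simp only [hg, dif_pos h, Fin.coe_castSucc] at hgt
        have : h.choose = i := Fin.ext hgt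
        exact this ▸ h.choose_spec
      · simp only [hg, dif_neg h, Fin.val_last] at hgt
        omega
    have hΦdvd : ∀ i, Φ g i ∣ d i := by
      intro i
      show (∏ t ∈ Finset.univ.filter (fun t => ((g t : ℕ) = (i : ℕ))), p (ι t)) ∣ d i
      have himg : ∏ t ∈ Finset.univ.filter (fun t => ((g t : ℕ) = (i : ℕ))), p (ι t)
          = ∏ q ∈ (Finset.univ.filter (fun t => ((g t : ℕ) = (i : ℕ)))).image
              (fun t => p (ι t)), q := by
        rw [Finset.prod_image]
        intro t1 _ t2 _ h
        exact hιinj (hinj h)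
      rw [himg]
      refine Finset.prod_primes_dvd _ ?_ ?_
      · intro q hq
        simp only [Finset.mem_image, Finset.mem_filter] at hq
        obtain ⟨t, _, rfl⟩ := hq
        exact (hp (ι t)).prime
      · intro q hq
        simp only [Finset.mem_image, Finset.mem_filter] at hq
        obtain ⟨t, ⟨_, ht⟩, rfl⟩ := hq
        exact hgdvd t i ht
    have hdΦa : ∀ i, d i ∣ Φ g i * a := by
      intro i
      have hsqd : Squarefree (d i) := hsqn.squarefree_of_dvd (hdi i)
      conv_lhs => rw [← Nat.prod_primeFactors_of_squarefree hsqd]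
      refine Finset.prod_primes_dvd _ (fun q hq => (Nat.prime_of_mem_primeFactors hq).prime)
        (fun q hq => ?_)
      have hqd : q ∣ d i := Nat.dvd_of_mem_primeFactors hq
      have hqp : q.Prime := Nat.prime_of_mem_primeFactors hq
      have hqn : q ∣ n := hqd.trans (hdi i)
      obtain ⟨s, _, hqs⟩ := (hqp.prime.dvd_finset_prod_iff _).mp hqn
      have hqs' : q = p s := (Nat.prime_dvd_prime_iff_eq hqp (hp s)).mp hqs
      by_cases hsj : (s : ℕ) < j
      · refine Dvd.dvd.mul_left ?_ _
        rw [hqs', ha]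
        exact Finset.dvd_prod_of_mem _ (Finset.mem_filter.mpr ⟨Finset.mem_univ _, hsj⟩)
      · -- s comes from a large prime
        have hst : (s : ℕ) - j < m - j := by omega
        set t : Fin (m - j) := ⟨(s : ℕ) - j, hst⟩ with htdef
        have hιt : ι t = s := Fin.ext (by simp [hιdef, htdef]; omega)
        have hex : ∃ i' : Fin k, p (ι t) ∣ d i' := ⟨i, by rw [hιt, ← hqs']; exact hqd⟩
        have hchoose : hex.choose = i := by
          refine huniq (ι t) _ _ hex.choose_spec ?_
          rw [hιt, ← hqs']; exact hqd
        have hgt : (g t : ℕ) = (i : ℕ) := by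
          have hgt' : g t = Fin.castSucc hex.choose := by
            simp only [hg]; exact dif_pos hex
          rw [hgt', Fin.coe_castSucc, hchoose]
        refine Dvd.dvd.mul_right ?_ _
        rw [hqs', ← hιt]
        show p (ι t) ∣ ∏ t' ∈ Finset.univ.filter (fun t' => ((g t' : ℕ) = (i : ℕ))), p (ι t')
        exact Finset.dvd_prod_of_mem _ (Finset.mem_filter.mpr ⟨Finset.mem_univ _, hgt⟩)
    -- conclude membership
    intro i _
    have hxi := hxd i (Set.mem_univ i)
    simp only [Set.mem_Ico] at hxi ⊢
    have hd1R : (1:ℝ) ≤ (d i : ℝ) := by exact_mod_cast hd1 i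
    have hΦ1R : (1:ℝ) ≤ (Φ g i : ℝ) := by exact_mod_cast hΦpos g i
    have hlogdiv : Real.log ((d i : ℝ) / 2) = Real.log (d i) - Real.log 2 :=
      Real.log_div (by positivity) (by norm_num)
    have hΦled : Real.log (Φ g i : ℝ) ≤ Real.log (d i : ℝ) := by
      apply Real.log_le_log (by positivity)
      exact_mod_cast Nat.le_of_dvd (hd1 i) (hΦdvd i)
    have hdle : Real.log (d i : ℝ) ≤ Real.log (Φ g i : ℝ) + Real.log (a : ℝ) := by
      have ha0R : (0:ℝ) < (a : ℝ) := by exact_mod_cast Nat.lt_of_lt_of_le Nat.zero_lt_one ha1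
      rw [← Real.log_mul (by positivity) (ne_of_gt ha0R)]
      apply Real.log_le_log (by positivity)
      have := Nat.le_of_dvd (Nat.mul_pos (hΦpos g i) ha1) (hdΦa i)
      exact_mod_cast this
    constructor
    · calc Real.log (Φ g i : ℝ) - Real.log 2 ≤ Real.log (d i : ℝ) - Real.log 2 := by linarith
        _ = Real.log ((d i : ℝ) / 2) := hlogdiv.symm
        _ ≤ x i := hxi.1
    · exact lt_of_lt_of_le hxi.2 hdle
  -- measure computation
  have hbox : ∀ g : Fin (m - j) → Fin (k + 1),
      volume (Set.univ.pi fun i : Fin k => Set.Ico (Real.log (Φ g i) - Real.log 2)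
        (Real.log (Φ g i) + Real.log a)) = ENNReal.ofReal A ^ k := by
    intro g
    rw [volume_pi_pi]
    have : ∀ i : Fin k, volume (Set.Ico (Real.log (Φ g i) - Real.log 2)
        (Real.log (Φ g i) + Real.log a)) = ENNReal.ofReal A := by
      intro i
      rw [Real.volume_Ico]
      congr 1
      rw [hA]; ring
    simp [this]
  have hmeas : volume (⋃ d ∈ {d : Fin k → ℕ | (∏ i, d i) ∣ n},
      Set.univ.pi fun i => Set.Ico (Real.log ((d i : ℝ) / 2)) (Real.log (d i))) ≤
      (((k + 1) ^ (m - j) : ℕ) : ℝ≥0∞) * ENNReal.ofReal A ^ k := by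
    refine le_trans (measure_mono hsub) ?_
    refine le_trans (measure_iUnion_fintype_le _ _) ?_
    simp only [hbox]
    rw [Finset.sum_const, nsmul_eq_mul]
    apply le_of_eq
    congr 1
    simp [Fintype.card_fun]
  -- convert to reals
  rw [Lk]
  have hfin : (((k + 1) ^ (m - j) : ℕ) : ℝ≥0∞) * ENNReal.ofReal A ^ k ≠ ⊤ := by
    apply ENNReal.mul_ne_top (by simp)
    exact ENNReal.pow_ne_top ENNReal.ofReal_ne_top
  have := ENNReal.toReal_mono hfin hmeas
  refine le_trans this (le_of_eq ?_)
  rw [ENNReal.toReal_mul, ENNReal.toReal_pow, ENNReal.toReal_natCast,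
    ENNReal.toReal_ofReal hA0]
  push_cast
  ring
end

section
/- For every x ≥ z > 1, the number of positive integers n ≤ x all of whose prime factors exceed z is O(x / log z), with an absolute implied constant. -/
open Finset ArithmeticFunction

noncomputable section
namespace Stmt13

def D (K : ℕ) : Finset ℕ := (Finset.Icc 1 K).filter Squarefree

lemma mem_D {K d : ℕ} : d ∈ D K ↔ (1 ≤ d ∧ d ≤ K) ∧ Squarefree d := by
  simp [D, Finset.mem_filter, Finset.mem_Icc, and_assoc]

lemma one_mem_D {K : ℕ} (hK : 1 ≤ K) : 1 ∈ D K :=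
  mem_D.mpr ⟨⟨le_refl 1, hK⟩, squarefree_one⟩

lemma pos_of_mem_D {K d : ℕ} (h : d ∈ D K) : 0 < d := (mem_D.mp h).1.1

lemma dvd_mem_D {K d e : ℕ} (hd : d ∈ D K) (he : e ∣ d) : e ∈ D K := by
  obtain ⟨⟨h1, h2⟩, hsq⟩ := mem_D.mp hd
  refine mem_D.mpr ⟨⟨Nat.one_le_iff_ne_zero.mpr ?_, le_trans (Nat.le_of_dvd h1 he) h2⟩,
    hsq.squarefree_of_dvd he⟩
  rintro rfl
  exact absurd (Nat.eq_zero_of_zero_dvd he) (by omega)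

def G (K : ℕ) : ℝ := ∑ d ∈ D K, 1 / (Nat.totient d : ℝ)

def yw (K f : ℕ) : ℝ := (moebius f : ℝ) / ((Nat.totient f : ℝ) * G K)

def lam (K d : ℕ) : ℝ :=
  (d : ℝ) * ∑ f ∈ (D K).filter (d ∣ ·), (moebius (f / d) : ℝ) * yw K f

lemma one_le_G {K : ℕ} (hK : 1 ≤ K) : 1 ≤ G K := by
  have h := Finset.single_le_sum (f := fun d => 1 / (Nat.totient d : ℝ))
    (fun i _ => by positivity) (one_mem_D hK)
  rw [G]
  simpa [Nat.totient_one] using h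

lemma G_pos {K : ℕ} (hK : 1 ≤ K) : 0 < G K := lt_of_lt_of_le one_pos (one_le_G hK)

lemma totient_pos_real {K f : ℕ} (hf : f ∈ D K) : (0:ℝ) < (Nat.totient f : ℝ) := by
  exact_mod_cast Nat.totient_pos.mpr (pos_of_mem_D hf)

lemma sum_moebius_divisors (n : ℕ) :
    ∑ t ∈ n.divisors, moebius t = if n = 1 then (1 : ℤ) else 0 := by
  have h : (moebius * ((zeta : ArithmeticFunction ℕ) : ArithmeticFunction ℤ)) n = (1 : ArithmeticFunction ℤ) n := by
    rw [moebius_mul_coe_zeta]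
  rwa [coe_mul_zeta_apply, one_apply] at h

lemma moebius_block {K f g : ℕ} (hg : g ∈ D K) :
    ∑ d ∈ (D K).filter (fun d => f ∣ d ∧ d ∣ g), (moebius (g / d) : ℝ)
      = if g = f then 1 else 0 := by
  have hg0 : 0 < g := pos_of_mem_D hg
  by_cases hfg : f ∣ g
  · have hf0 : 0 < f := Nat.pos_of_dvd_of_pos hfg hg0
    have key : ∑ d ∈ (D K).filter (fun d => f ∣ d ∧ d ∣ g), (moebius (g / d) : ℝ)
        = ∑ t ∈ (g / f).divisors, (moebius t : ℝ) := by
      refine Finset.sum_nbij' (i := fun d => g / d) (j := fun t => g / t) ?_ ?_ ?_ ?_ ?_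
      · intro d hd
        have hmem := Finset.mem_filter.mp hd
        obtain ⟨hdD, hfd, hdg⟩ : d ∈ D K ∧ f ∣ d ∧ d ∣ g := ⟨hmem.1, hmem.2.1, hmem.2.2⟩
        rw [Nat.mem_divisors]
        constructor
        · show g / d ∣ g / f
          obtain ⟨u, rfl⟩ := hfd
          obtain ⟨v, rfl⟩ := hdg
          have hfu : 0 < f * u := pos_of_mem_D hdD
          rw [Nat.mul_div_cancel_left _ hfu, Nat.mul_assoc, Nat.mul_div_cancel_left _ hf0]
          exact Dvd.intro_left u rfl
        · exact Nat.ne_of_gt (Nat.div_pos (Nat.le_of_dvd hg0 hfg) hf0)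
      · intro t ht
        obtain ⟨htd, hne⟩ := Nat.mem_divisors.mp ht
        have htg : t ∣ g := htd.trans (Nat.div_dvd_of_dvd hfg)
        have ht0 : 0 < t := Nat.pos_of_dvd_of_pos htg hg0
        refine Finset.mem_filter.mpr ⟨dvd_mem_D hg (Nat.div_dvd_of_dvd htg), ?_, Nat.div_dvd_of_dvd htg⟩
        show f ∣ g / t
        obtain ⟨s, hs⟩ := htd
        have hgt : g / t = f * s := by
          have h1 : g = f * (g / f) := (Nat.mul_div_cancel' hfg).symm
          have h2 : g = t * (f * s) := by rw [h1, hs]; ring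
          rw [h2, Nat.mul_div_cancel_left _ ht0]
        rw [hgt]
        exact Dvd.intro s rfl
      · intro d hd
        have hdg : d ∣ g := (Finset.mem_filter.mp hd).2.2
        exact Nat.div_div_self hdg hg0.ne'
      · intro t ht
        obtain ⟨htd, _⟩ := Nat.mem_divisors.mp ht
        exact Nat.div_div_self (htd.trans (Nat.div_dvd_of_dvd hfg)) hg0.ne'
      · intro d hd; rfl
    rw [key]
    have h2 : ∑ t ∈ (g / f).divisors, (moebius t : ℝ)
        = ((∑ t ∈ (g / f).divisors, moebius t : ℤ) : ℝ) := by push_cast; rfl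
    rw [h2, sum_moebius_divisors]
    have h3 : g / f = 1 ↔ g = f := by
      constructor
      · intro h
        have := (Nat.mul_div_cancel' hfg).symm
        rw [h, mul_one] at this; exact this
      · rintro rfl; exact Nat.div_self hg0
    by_cases h : g = f
    · subst h
      simp [Nat.div_self hg0]
    · simp [h, (not_iff_not.mpr h3).mpr h]
  · have hempty : (D K).filter (fun d => f ∣ d ∧ d ∣ g) = ∅ := by
      refine Finset.filter_false_of_mem ?_
      intro d _ h
      exact hfg (h.1.trans h.2)
    have hne : g ≠ f := by rintro rfl; exact hfg dvd_rfl
    simp [hempty, hne]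

lemma sum_lam_div {K f : ℕ} (hf : f ∈ D K) :
    ∑ d ∈ (D K).filter (f ∣ ·), lam K d / d = yw K f := by
  have h0 : ∀ d ∈ (D K).filter (f ∣ ·),
      lam K d / d = ∑ g ∈ (D K).filter (d ∣ ·), (moebius (g / d) : ℝ) * yw K g := by
    intro d hd
    have hd0 : ((d : ℝ)) ≠ 0 :=
      Nat.cast_ne_zero.mpr (pos_of_mem_D (Finset.mem_filter.mp hd).1).ne'
    rw [lam, mul_div_cancel_left₀ _ hd0]
  rw [Finset.sum_congr rfl h0]
  calc ∑ d ∈ (D K).filter (f ∣ ·), ∑ g ∈ (D K).filter (d ∣ ·), (moebius (g / d) : ℝ) * yw K g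
      = ∑ d ∈ D K, ∑ g ∈ D K,
          if f ∣ d ∧ d ∣ g then (moebius (g / d) : ℝ) * yw K g else 0 := by
        rw [Finset.sum_filter]
        refine Finset.sum_congr rfl fun d _ => ?_
        by_cases h : f ∣ d
        · simp only [h, if_true, true_and, Finset.sum_filter]
        · simp [h]
    _ = ∑ g ∈ D K, ∑ d ∈ D K,
          if f ∣ d ∧ d ∣ g then (moebius (g / d) : ℝ) * yw K g else 0 := Finset.sum_comm
    _ = ∑ g ∈ D K,
          (∑ d ∈ (D K).filter (fun d => f ∣ d ∧ d ∣ g), (moebius (g / d) : ℝ)) * yw K g := by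
        refine Finset.sum_congr rfl fun g _ => ?_
        rw [Finset.sum_filter, Finset.sum_mul]
        refine Finset.sum_congr rfl fun d _ => ?_
        by_cases h : f ∣ d ∧ d ∣ g <;> simp [h]
    _ = ∑ g ∈ D K, (if g = f then (1:ℝ) else 0) * yw K g := by
        refine Finset.sum_congr rfl fun g hg => ?_
        rw [moebius_block hg]
    _ = yw K f := by
        simp_rw [ite_mul, one_mul, zero_mul]
        rw [Finset.sum_ite_eq' (D K) f (yw K), if_pos hf]

lemma moebius_sq_real {K f : ℕ} (hf : f ∈ D K) : (moebius f : ℝ) * (moebius f : ℝ) = 1 := by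
  have h := moebius_sq_eq_one_of_squarefree (mem_D.mp hf).2
  have : ((moebius f ^ 2 : ℤ) : ℝ) = 1 := by rw [h]; norm_num
  push_cast at this
  nlinarith [this]

lemma sum_inv_totient_mul {K : ℕ} (hK : 1 ≤ K) :
    ∑ f ∈ D K, 1 / ((Nat.totient f : ℝ) * G K) = 1 := by
  simp_rw [← div_div]
  rw [← Finset.sum_div]
  exact div_self (G_pos hK).ne'

lemma lam_one {K : ℕ} (hK : 1 ≤ K) : lam K 1 = 1 := by
  rw [lam]
  rw [Finset.filter_true_of_mem (fun f _ => one_dvd f)]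
  have h : ∀ f ∈ D K, (moebius (f / 1) : ℝ) * yw K f = 1 / ((Nat.totient f : ℝ) * G K) := by
    intro f hf
    rw [Nat.div_one, yw, mul_div_assoc']
    rw [moebius_sq_real hf]
  rw [Finset.sum_congr rfl h, sum_inv_totient_mul hK]
  norm_num

lemma abs_moebius_real (n : ℕ) : |(moebius n : ℝ)| ≤ 1 := by
  have h := abs_moebius_le_one (n := n)
  calc |(moebius n : ℝ)| = ((|moebius n| : ℤ) : ℝ) := by push_cast; rfl
    _ ≤ 1 := by exact_mod_cast h

lemma abs_lam_le {K d : ℕ} (hK : 1 ≤ K) : |lam K d| ≤ (d : ℝ) := by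
  rw [lam, abs_mul, abs_of_nonneg (by positivity : (0:ℝ) ≤ (d:ℝ))]
  have h1 : |∑ f ∈ (D K).filter (d ∣ ·), (moebius (f / d) : ℝ) * yw K f| ≤ 1 := by
    calc |∑ f ∈ (D K).filter (d ∣ ·), (moebius (f / d) : ℝ) * yw K f|
        ≤ ∑ f ∈ (D K).filter (d ∣ ·), |(moebius (f / d) : ℝ) * yw K f| :=
          Finset.abs_sum_le_sum_abs _ _
      _ ≤ ∑ f ∈ (D K).filter (d ∣ ·), 1 / ((Nat.totient f : ℝ) * G K) := by
          refine Finset.sum_le_sum fun f hf => ?_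
          have hfD := (Finset.mem_filter.mp hf).1
          have hφ : (0:ℝ) < (Nat.totient f : ℝ) := totient_pos_real hfD
          have hG := G_pos hK
          rw [abs_mul, yw, abs_div]
          have h2 : |(Nat.totient f : ℝ) * G K| = (Nat.totient f : ℝ) * G K := by
            rw [abs_of_pos (by positivity)]
          rw [h2]
          have hpos : (0:ℝ) < (Nat.totient f : ℝ) * G K := by positivity
          calc |(moebius (f / d) : ℝ)| * (|(moebius f : ℝ)| / ((Nat.totient f : ℝ) * G K))
              = |(moebius (f / d) : ℝ)| * |(moebius f : ℝ)| / ((Nat.totient f : ℝ) * G K) := by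
                ring
            _ ≤ 1 / ((Nat.totient f : ℝ) * G K) := by
                apply (div_le_div_iff_of_pos_right hpos).mpr
                calc |(moebius (f / d) : ℝ)| * |(moebius f : ℝ)| ≤ 1 * 1 :=
                      mul_le_mul (abs_moebius_real _) (abs_moebius_real _) (abs_nonneg _)
                        (by norm_num)
                  _ = 1 := by norm_num
      _ ≤ ∑ f ∈ D K, 1 / ((Nat.totient f : ℝ) * G K) := by
          refine Finset.sum_le_sum_of_subset_of_nonneg (Finset.filter_subset _ _)
            fun f hf _ => le_of_lt (div_pos one_pos
              (mul_pos (totient_pos_real hf) (G_pos hK)))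
      _ = 1 := sum_inv_totient_mul hK
  calc (d:ℝ) * |∑ f ∈ (D K).filter (d ∣ ·), (moebius (f / d) : ℝ) * yw K f|
      ≤ (d:ℝ) * 1 := by
        apply mul_le_mul_of_nonneg_left h1 (by positivity)
    _ = (d:ℝ) := mul_one _


lemma gcd_eq_sum {K d e : ℕ} (hd : d ∈ D K) (he : e ∈ D K) :
    ((Nat.gcd d e : ℕ) : ℝ) = ∑ f ∈ D K, if f ∣ d ∧ f ∣ e then (Nat.totient f : ℝ) else 0 := by
  rw [← Finset.sum_filter]
  have hset : (D K).filter (fun f => f ∣ d ∧ f ∣ e) = (Nat.gcd d e).divisors := by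
    ext f
    simp only [Finset.mem_filter, Nat.mem_divisors]
    constructor
    · rintro ⟨hfD, h1, h2⟩
      exact ⟨Nat.dvd_gcd h1 h2, (Nat.gcd_pos_of_pos_left e (pos_of_mem_D hd)).ne'⟩
    · rintro ⟨hf, _⟩
      exact ⟨dvd_mem_D hd (hf.trans (Nat.gcd_dvd_left d e)),
        hf.trans (Nat.gcd_dvd_left d e), hf.trans (Nat.gcd_dvd_right d e)⟩
  rw [hset]
  rw [show ∑ f ∈ (Nat.gcd d e).divisors, (Nat.totient f : ℝ)
      = ((∑ f ∈ (Nat.gcd d e).divisors, Nat.totient f : ℕ) : ℝ) by push_cast; rfl]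
  rw [Nat.sum_totient]

lemma quadform {K : ℕ} (hK : 1 ≤ K) :
    ∑ d ∈ D K, ∑ e ∈ D K, lam K d * lam K e / (Nat.lcm d e : ℝ) = 1 / G K := by
  have hA : ∀ d ∈ D K, ∀ e ∈ D K,
      lam K d * lam K e / (Nat.lcm d e : ℝ)
        = (Nat.gcd d e : ℝ) * ((lam K d / d) * (lam K e / e)) := by
    intro d hd e he
    have hd0 : ((d : ℝ)) ≠ 0 := Nat.cast_ne_zero.mpr (pos_of_mem_D hd).ne'
    have he0 : ((e : ℝ)) ≠ 0 := Nat.cast_ne_zero.mpr (pos_of_mem_D he).ne'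
    have hl0 : ((Nat.lcm d e : ℝ)) ≠ 0 :=
      Nat.cast_ne_zero.mpr (Nat.lcm_ne_zero (pos_of_mem_D hd).ne' (pos_of_mem_D he).ne')
    have hgl : (Nat.gcd d e : ℝ) * (Nat.lcm d e : ℝ) = (d : ℝ) * e := by
      exact_mod_cast congrArg (Nat.cast : ℕ → ℝ) (Nat.gcd_mul_lcm d e)
    field_simp
    linear_combination (-(lam K d * lam K e)) * hgl
  calc ∑ d ∈ D K, ∑ e ∈ D K, lam K d * lam K e / (Nat.lcm d e : ℝ)
      = ∑ d ∈ D K, ∑ e ∈ D K, ∑ f ∈ D K,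
          (if f ∣ d ∧ f ∣ e then (Nat.totient f : ℝ) else 0) * ((lam K d / d) * (lam K e / e)) := by
        refine Finset.sum_congr rfl fun d hd => Finset.sum_congr rfl fun e he => ?_
        rw [hA d hd e he, gcd_eq_sum hd he, Finset.sum_mul]
    _ = ∑ f ∈ D K, ∑ d ∈ D K, ∑ e ∈ D K,
          (if f ∣ d ∧ f ∣ e then (Nat.totient f : ℝ) else 0) * ((lam K d / d) * (lam K e / e)) := by
        rw [show ∑ d ∈ D K, ∑ e ∈ D K, ∑ f ∈ D K,
            (if f ∣ d ∧ f ∣ e then (Nat.totient f : ℝ) else 0) * ((lam K d / d) * (lam K e / e))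
            = ∑ d ∈ D K, ∑ f ∈ D K, ∑ e ∈ D K,
            (if f ∣ d ∧ f ∣ e then (Nat.totient f : ℝ) else 0) * ((lam K d / d) * (lam K e / e))
          from Finset.sum_congr rfl fun d _ => Finset.sum_comm]
        exact Finset.sum_comm
    _ = ∑ f ∈ D K, (Nat.totient f : ℝ) *
          ((∑ d ∈ (D K).filter (f ∣ ·), lam K d / d) * (∑ e ∈ (D K).filter (f ∣ ·), lam K e / e)) := by
        refine Finset.sum_congr rfl fun f hf => ?_
        have hstep : ∀ d ∈ D K,
            ∑ e ∈ D K, (if f ∣ d ∧ f ∣ e then (Nat.totient f : ℝ) else 0)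
              * ((lam K d / d) * (lam K e / e))
            = (if f ∣ d then lam K d / d else 0)
                * ((Nat.totient f : ℝ) * ∑ e ∈ (D K).filter (f ∣ ·), lam K e / e) := by
          intro d _
          by_cases hfd : f ∣ d
          · simp only [hfd, true_and, if_true]
            rw [Finset.mul_sum, Finset.sum_filter, Finset.mul_sum]
            refine Finset.sum_congr rfl fun e _ => ?_
            by_cases hfe : f ∣ e <;> simp [hfe] <;> ring
          · simp [hfd]
        rw [Finset.sum_congr rfl hstep, ← Finset.sum_mul, ← Finset.sum_filter]
        ring
    _ = ∑ f ∈ D K, (Nat.totient f : ℝ) * (yw K f * yw K f) := by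
        refine Finset.sum_congr rfl fun f hf => by rw [sum_lam_div hf]
    _ = ∑ f ∈ D K, 1 / ((Nat.totient f : ℝ) * G K) * (1 / G K) := by
        refine Finset.sum_congr rfl fun f hf => ?_
        have hφ : ((Nat.totient f : ℝ)) ≠ 0 := (totient_pos_real hf).ne'
        have hG : G K ≠ 0 := (G_pos hK).ne'
        rw [yw, div_mul_div_comm, moebius_sq_real hf]
        field_simp
    _ = 1 / G K := by
        rw [← Finset.sum_mul, sum_inv_totient_mul hK, one_mul]

lemma sum_inv_sq_le (n : ℕ) :
    ∑ b ∈ Finset.Ico 1 (n + 1), 1 / ((b : ℝ)) ^ 2 ≤ 2 - 2 / ((n : ℝ) + 1) := by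
  induction n with
  | zero => simp
  | succ n ih =>
    rw [Finset.sum_Ico_succ_top (by omega : 1 ≤ n + 1)]
    have hn : (0:ℝ) < (n : ℝ) + 1 := by positivity
    have hn2 : (0:ℝ) < (n : ℝ) + 2 := by positivity
    have hkey : 1 / ((n : ℝ) + 1) ^ 2 ≤ 2 / ((n : ℝ) + 1) - 2 / ((n : ℝ) + 2) := by
      rw [div_sub_div _ _ hn.ne' hn2.ne', div_le_div_iff₀ (by positivity) (by positivity)]
      nlinarith [sq_nonneg ((n : ℝ))]
    push_cast
    have h2 : ((n : ℝ) + 1 + 1) = (n : ℝ) + 2 := by ring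
    rw [h2]
    linarith

lemma sum_Icc_inv_sq_le (K : ℕ) : ∑ b ∈ Finset.Icc 1 K, 1 / ((b : ℝ)) ^ 2 ≤ 2 := by
  rw [← Finset.Ico_add_one_right_eq_Icc]
  have := sum_inv_sq_le K
  have h2 : (0:ℝ) ≤ 2 / ((K : ℝ) + 1) := by positivity
  linarith

lemma harmonic_le_two_G {K : ℕ} (hK : 1 ≤ K) :
    ∑ n ∈ Finset.Icc 1 K, ((n : ℝ))⁻¹ ≤ 2 * G K := by
  classical
  have hch : ∀ n : ℕ, 0 < n →
      ∃ p : ℕ × ℕ, 0 < p.1 ∧ 0 < p.2 ∧ p.2 ^ 2 * p.1 = n ∧ Squarefree p.1 := by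
    intro n hn
    obtain ⟨a, b, ha, hb, hab, hsq⟩ := Nat.sq_mul_squarefree_of_pos hn
    exact ⟨(a, b), ha, hb, hab, hsq⟩
  set F : ℕ → ℕ × ℕ := fun n => if h : 0 < n then (hch n h).choose else (1, 1) with hF
  have hspec : ∀ n, 0 < n →
      0 < (F n).1 ∧ 0 < (F n).2 ∧ (F n).2 ^ 2 * (F n).1 = n ∧ Squarefree (F n).1 := by
    intro n hn
    rw [hF]
    simp only [dif_pos hn]
    exact (hch n hn).choose_spec
  have hinj : ∀ m ∈ Finset.Icc 1 K, ∀ n ∈ Finset.Icc 1 K, F m = F n → m = n := by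
    intro m hm n hn h
    have hm0 : 0 < m := (Finset.mem_Icc.mp hm).1
    have hn0 : 0 < n := (Finset.mem_Icc.mp hn).1
    rw [← (hspec m hm0).2.2.1, ← (hspec n hn0).2.2.1, h]
  calc ∑ n ∈ Finset.Icc 1 K, ((n : ℝ))⁻¹
      = ∑ n ∈ Finset.Icc 1 K, (1 / ((F n).1 : ℝ)) * (1 / ((F n).2 : ℝ) ^ 2) := by
        refine Finset.sum_congr rfl fun n hn => ?_
        have hn0 : 0 < n := (Finset.mem_Icc.mp hn).1
        obtain ⟨ha, hb, hab, _⟩ := hspec n hn0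
        have hcast : ((n : ℝ)) = ((F n).2 : ℝ) ^ 2 * ((F n).1 : ℝ) := by
          exact_mod_cast (congrArg (Nat.cast : ℕ → ℝ) hab).symm
        rw [hcast, mul_inv]
        ring
    _ = ∑ p ∈ (Finset.Icc 1 K).image F, (1 / (p.1 : ℝ)) * (1 / (p.2 : ℝ) ^ 2) :=
        (Finset.sum_image (f := fun p : ℕ × ℕ => (1 / (p.1 : ℝ)) * (1 / (p.2 : ℝ) ^ 2)) hinj).symm
    _ ≤ ∑ p ∈ (D K) ×ˢ Finset.Icc 1 K, (1 / (p.1 : ℝ)) * (1 / (p.2 : ℝ) ^ 2) := by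
        refine Finset.sum_le_sum_of_subset_of_nonneg ?_ fun p _ _ => by positivity
        intro p hp
        obtain ⟨n, hn, rfl⟩ := Finset.mem_image.mp hp
        have hn0 : 0 < n := (Finset.mem_Icc.mp hn).1
        have hnK : n ≤ K := (Finset.mem_Icc.mp hn).2
        obtain ⟨ha, hb, hab, hsq⟩ := hspec n hn0
        have hadvd : (F n).1 ∣ n := Dvd.intro_left _ hab
        have hble : (F n).2 ≤ n := by
          calc (F n).2 ≤ (F n).2 ^ 2 := Nat.le_self_pow two_ne_zero _
            _ ≤ (F n).2 ^ 2 * (F n).1 := Nat.le_mul_of_pos_right _ ha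
            _ = n := hab
        refine Finset.mem_product.mpr ⟨mem_D.mpr ⟨⟨ha, ?_⟩, hsq⟩, Finset.mem_Icc.mpr ⟨hb, ?_⟩⟩
        · exact le_trans (Nat.le_of_dvd hn0 hadvd) hnK
        · exact le_trans hble hnK
    _ = ∑ a ∈ D K, (1 / (a : ℝ)) * ∑ b ∈ Finset.Icc 1 K, 1 / ((b : ℝ)) ^ 2 := by
        rw [Finset.sum_product]
        refine Finset.sum_congr rfl fun a _ => ?_
        rw [Finset.mul_sum]
    _ ≤ ∑ a ∈ D K, (1 / (a : ℝ)) * 2 := by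
        refine Finset.sum_le_sum fun a ha => ?_
        exact mul_le_mul_of_nonneg_left (sum_Icc_inv_sq_le K) (by positivity)
    _ ≤ ∑ a ∈ D K, (1 / (Nat.totient a : ℝ)) * 2 := by
        refine Finset.sum_le_sum fun a ha => ?_
        have h1 : (1:ℝ) / (a : ℝ) ≤ 1 / (Nat.totient a : ℝ) := by
          apply one_div_le_one_div_of_le (totient_pos_real ha)
          exact_mod_cast Nat.totient_le a
        linarith
    _ = 2 * G K := by rw [G, ← Finset.sum_mul]; ring

lemma log_le_two_G {K : ℕ} (hK : 1 ≤ K) : Real.log K ≤ 2 * G K := by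
  have h1 : Real.log K ≤ ((harmonic K : ℚ) : ℝ) := by
    have h := log_le_harmonic_floor (K : ℝ) (by positivity)
    rwa [Nat.floor_natCast] at h
  have h2 : ((harmonic K : ℚ) : ℝ) = ∑ n ∈ Finset.Icc 1 K, ((n : ℝ))⁻¹ := by
    rw [harmonic_eq_sum_Icc]
    push_cast
    rfl
  rw [h2] at h1
  exact h1.trans (harmonic_le_two_G hK)


open scoped Classical in
/-- The main sieve estimate. -/
lemma sieve_bound (K M : ℕ) (hK : 1 ≤ K) (x z : ℝ) (hMx : (M : ℝ) ≤ x)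
    (hxM : x < M + 1) (hKz : (K : ℝ) ≤ z) :
    ((((Finset.Ioc 0 M).filter (fun n => ∀ p : ℕ, p.Prime → p ∣ n → z < p)).card : ℝ)
      ≤ x / G K + 2 * (K : ℝ) ^ 4) := by
  have hx0 : (0:ℝ) ≤ x := le_trans (Nat.cast_nonneg M) hMx
  set S := (Finset.Ioc 0 M).filter (fun n => ∀ p : ℕ, p.Prime → p ∣ n → z < (p:ℝ)) with hS
  -- Step 1: on S, the weight sum is 1
  have hone : ∀ n ∈ S, ∑ d ∈ (D K).filter (· ∣ n), lam K d = 1 := by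
    intro n hn
    have hPn := (Finset.mem_filter.mp hn).2
    have hfil : (D K).filter (· ∣ n) = {1} := by
      ext d
      simp only [Finset.mem_filter, Finset.mem_singleton]
      constructor
      · rintro ⟨hdD, hdn⟩
        by_contra hne
        obtain ⟨p, hp, hpd⟩ := Nat.exists_prime_and_dvd hne
        have hzp : z < (p : ℝ) := hPn p hp (hpd.trans hdn)
        have hple : (p : ℝ) ≤ (K : ℝ) := by
          exact_mod_cast le_trans (Nat.le_of_dvd (pos_of_mem_D hdD) hpd) (mem_D.mp hdD).1.2
        linarith
      · rintro rfl
        exact ⟨one_mem_D hK, one_dvd n⟩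
    rw [hfil, Finset.sum_singleton, lam_one hK]
  -- Step 2
  have hstep2 : ((S.card : ℝ)) ≤ ∑ n ∈ Finset.Ioc 0 M, (∑ d ∈ (D K).filter (· ∣ n), lam K d) ^ 2 := by
    have h1 : ((S.card : ℝ)) = ∑ n ∈ S, (∑ d ∈ (D K).filter (· ∣ n), lam K d) ^ 2 := by
      rw [Finset.card_eq_sum_ones]
      push_cast
      refine Finset.sum_congr rfl fun n hn => ?_
      rw [hone n hn]
      norm_num
    rw [h1]
    exact Finset.sum_le_sum_of_subset_of_nonneg (Finset.filter_subset _ _)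
      fun n _ _ => sq_nonneg _
  -- Step 3: expansion
  have hexp : ∑ n ∈ Finset.Ioc 0 M, (∑ d ∈ (D K).filter (· ∣ n), lam K d) ^ 2
      = ∑ d ∈ D K, ∑ e ∈ D K, lam K d * lam K e * ((M / Nat.lcm d e : ℕ) : ℝ) := by
    calc ∑ n ∈ Finset.Ioc 0 M, (∑ d ∈ (D K).filter (· ∣ n), lam K d) ^ 2
        = ∑ n ∈ Finset.Ioc 0 M, ∑ d ∈ D K, ∑ e ∈ D K,
            (if d ∣ n ∧ e ∣ n then lam K d * lam K e else 0) := by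
          refine Finset.sum_congr rfl fun n _ => ?_
          rw [sq, Finset.sum_filter, Finset.sum_mul_sum]
          refine Finset.sum_congr rfl fun d _ => Finset.sum_congr rfl fun e _ => ?_
          by_cases h1 : d ∣ n <;> by_cases h2 : e ∣ n <;> simp [h1, h2]
      _ = ∑ d ∈ D K, ∑ e ∈ D K, ∑ n ∈ Finset.Ioc 0 M,
            (if d ∣ n ∧ e ∣ n then lam K d * lam K e else 0) := by
          rw [Finset.sum_comm]
          exact Finset.sum_congr rfl fun d _ => Finset.sum_comm
      _ = ∑ d ∈ D K, ∑ e ∈ D K, lam K d * lam K e * ((M / Nat.lcm d e : ℕ) : ℝ) := by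
          refine Finset.sum_congr rfl fun d _ => Finset.sum_congr rfl fun e _ => ?_
          calc ∑ n ∈ Finset.Ioc 0 M, (if d ∣ n ∧ e ∣ n then lam K d * lam K e else 0)
              = ∑ n ∈ (Finset.Ioc 0 M).filter (fun n => Nat.lcm d e ∣ n), lam K d * lam K e := by
                rw [Finset.sum_filter]
                exact Finset.sum_congr rfl fun n _ => if_congr Nat.lcm_dvd_iff.symm rfl rfl
            _ = (((Finset.Ioc 0 M).filter (fun n => Nat.lcm d e ∣ n)).card : ℝ)
                  * (lam K d * lam K e) := by
                rw [Finset.sum_const, nsmul_eq_mul]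
            _ = lam K d * lam K e * ((M / Nat.lcm d e : ℕ) : ℝ) := by
                rw [Nat.Ioc_filter_dvd_card_eq_div]
                ring
  -- Step 4: floor comparison
  have hfloor : ∀ d ∈ D K, ∀ e ∈ D K,
      lam K d * lam K e * ((M / Nat.lcm d e : ℕ) : ℝ)
        ≤ x * (lam K d * lam K e / (Nat.lcm d e : ℝ)) + |lam K d| * |lam K e| * 2 := by
    intro d hd e he
    set L := Nat.lcm d e with hL
    have hL1 : 1 ≤ L := Nat.one_le_iff_ne_zero.mpr
      (Nat.lcm_ne_zero (pos_of_mem_D hd).ne' (pos_of_mem_D he).ne')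
    have hLpos : (0:ℝ) < (L : ℝ) := by exact_mod_cast hL1
    have hup : ((M / L : ℕ) : ℝ) ≤ x / L := by
      rw [le_div_iff₀ hLpos]
      calc ((M / L : ℕ) : ℝ) * L = ((M / L * L : ℕ) : ℝ) := by push_cast; ring
        _ ≤ (M : ℝ) := by exact_mod_cast Nat.div_mul_le_self M L
        _ ≤ x := hMx
    have hlow : x / L - 2 ≤ ((M / L : ℕ) : ℝ) := by
      have h1 : M < L * (M / L) + L := by
        conv_lhs => rw [← Nat.div_add_mod M L]
        have := Nat.mod_lt M (show 0 < L by omega)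
        omega
      have h2 : (M : ℝ) < (L : ℝ) * ((M / L : ℕ) : ℝ) + L := by exact_mod_cast h1
      have h3 : x < (L : ℝ) * ((M / L : ℕ) : ℝ) + L + 1 := by linarith
      have h4 : x / L < ((M / L : ℕ) : ℝ) + 1 + 1 / L := by
        rw [div_lt_iff₀ hLpos]
        calc x < (L : ℝ) * ((M / L : ℕ) : ℝ) + L + 1 := h3
          _ = (((M / L : ℕ) : ℝ) + 1 + 1 / L) * L := by field_simp
      have h5 : 1 / (L : ℝ) ≤ 1 := by
        rw [div_le_one hLpos]; exact_mod_cast hL1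
      linarith
    have habs : |((M / L : ℕ) : ℝ) - x / L| ≤ 2 := abs_le.mpr ⟨by linarith, by linarith⟩
    have hsplit : lam K d * lam K e * ((M / L : ℕ) : ℝ)
        = x * (lam K d * lam K e / L) + lam K d * lam K e * (((M / L : ℕ) : ℝ) - x / L) := by
      field_simp
      ring
    rw [hsplit]
    have h6 : lam K d * lam K e * (((M / L : ℕ) : ℝ) - x / L) ≤ |lam K d| * |lam K e| * 2 := by
      calc lam K d * lam K e * (((M / L : ℕ) : ℝ) - x / L)
          ≤ |lam K d * lam K e * (((M / L : ℕ) : ℝ) - x / L)| := le_abs_self _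
        _ = |lam K d| * |lam K e| * |((M / L : ℕ) : ℝ) - x / L| := by
            rw [abs_mul, abs_mul]
        _ ≤ |lam K d| * |lam K e| * 2 :=
            mul_le_mul_of_nonneg_left habs (by positivity)
    linarith
  -- Step 5: sum of |lam|
  have hlamsum : ∑ d ∈ D K, |lam K d| ≤ (K : ℝ) ^ 2 := by
    calc ∑ d ∈ D K, |lam K d| ≤ ∑ d ∈ D K, (d : ℝ) :=
          Finset.sum_le_sum fun d _ => abs_lam_le hK
      _ ≤ ∑ d ∈ Finset.Icc 1 K, (d : ℝ) := by
          refine Finset.sum_le_sum_of_subset_of_nonneg (Finset.filter_subset _ _)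
            fun d _ _ => by positivity
      _ ≤ ∑ _d ∈ Finset.Icc 1 K, (K : ℝ) := by
          refine Finset.sum_le_sum fun d hd => ?_
          exact_mod_cast (Finset.mem_Icc.mp hd).2
      _ = (Finset.Icc 1 K).card * (K : ℝ) := by rw [Finset.sum_const, nsmul_eq_mul]
      _ ≤ (K : ℝ) ^ 2 := by
          rw [Nat.card_Icc]
          have : (K + 1 - 1 : ℕ) = K := by omega
          rw [this, sq]
  -- Assemble
  calc ((S.card : ℝ))
      ≤ ∑ n ∈ Finset.Ioc 0 M, (∑ d ∈ (D K).filter (· ∣ n), lam K d) ^ 2 := hstep2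
    _ = ∑ d ∈ D K, ∑ e ∈ D K, lam K d * lam K e * ((M / Nat.lcm d e : ℕ) : ℝ) := hexp
    _ ≤ ∑ d ∈ D K, ∑ e ∈ D K,
          (x * (lam K d * lam K e / (Nat.lcm d e : ℝ)) + |lam K d| * |lam K e| * 2) :=
        Finset.sum_le_sum fun d hd => Finset.sum_le_sum fun e he => hfloor d hd e he
    _ = x * (∑ d ∈ D K, ∑ e ∈ D K, lam K d * lam K e / (Nat.lcm d e : ℝ))
          + 2 * ((∑ d ∈ D K, |lam K d|) * (∑ e ∈ D K, |lam K e|)) := by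
        have e1 : x * (∑ d ∈ D K, ∑ e ∈ D K, lam K d * lam K e / (Nat.lcm d e : ℝ))
            = ∑ d ∈ D K, ∑ e ∈ D K, x * (lam K d * lam K e / (Nat.lcm d e : ℝ)) := by
          rw [Finset.mul_sum]
          exact Finset.sum_congr rfl fun d _ => Finset.mul_sum _ _ _
        have e2 : 2 * ((∑ d ∈ D K, |lam K d|) * (∑ e ∈ D K, |lam K e|))
            = ∑ d ∈ D K, ∑ e ∈ D K, |lam K d| * |lam K e| * 2 := by
          rw [Finset.sum_mul_sum, Finset.mul_sum]
          exact Finset.sum_congr rfl fun d _ => by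
            rw [Finset.mul_sum]
            exact Finset.sum_congr rfl fun e _ => by ring
        rw [e1, e2, ← Finset.sum_add_distrib]
        exact Finset.sum_congr rfl fun d _ => by rw [← Finset.sum_add_distrib]
    _ ≤ x * (1 / G K) + 2 * ((K : ℝ) ^ 2 * (K : ℝ) ^ 2) := by
        rw [quadform hK]
        have habs0 : (0:ℝ) ≤ ∑ d ∈ D K, |lam K d| :=
          Finset.sum_nonneg fun d _ => abs_nonneg _
        have h7 : (∑ d ∈ D K, |lam K d|) * (∑ e ∈ D K, |lam K e|)
            ≤ (K : ℝ) ^ 2 * (K : ℝ) ^ 2 :=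
          mul_le_mul hlamsum hlamsum habs0 (by positivity)
        nlinarith
    _ = x / G K + 2 * (K : ℝ) ^ 4 := by ring

end Stmt13
end

theorem stmt_13 :
    ∃ C : ℝ, 0 < C ∧ ∀ x z : ℝ, 1 < z → z ≤ x →
      (({n : ℕ | 0 < n ∧ (n : ℝ) ≤ x ∧
          ∀ p : ℕ, p.Prime → p ∣ n → z < p}.ncard : ℝ)) ≤
        C * x / Real.log z := by
  classical
  refine ⟨64, by norm_num, ?_⟩
  intro x z hz hzx
  have hx1 : (1:ℝ) < x := lt_of_lt_of_le hz hzx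
  have hx0 : (0:ℝ) ≤ x := by linarith
  have hz0 : (0:ℝ) < z := by linarith
  have hlogz : 0 < Real.log z := Real.log_pos hz
  set M := ⌊x⌋₊ with hM
  have hMx : (M : ℝ) ≤ x := Nat.floor_le hx0
  have hxM : x < M + 1 := Nat.lt_floor_add_one x
  have hSet : {n : ℕ | 0 < n ∧ (n : ℝ) ≤ x ∧ ∀ p : ℕ, p.Prime → p ∣ n → z < p}
      = ↑((Finset.Ioc 0 M).filter (fun n => ∀ p : ℕ, p.Prime → p ∣ n → z < p)) := by
    ext n
    simp only [Set.mem_setOf_eq, Finset.coe_filter, Finset.mem_Ioc, Set.mem_setOf_eq]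
    constructor
    · rintro ⟨h1, h2, h3⟩
      exact ⟨⟨h1, Nat.le_floor h2⟩, h3⟩
    · rintro ⟨⟨h1, h2⟩, h3⟩
      exact ⟨h1, le_trans (le_trans (Nat.cast_le.mpr h2) le_rfl) hMx, h3⟩
  rw [hSet, Set.ncard_coe_finset]
  by_cases hzsmall : z ≤ 2 ^ 16
  · -- trivial bound suffices
    have hcard : ((((Finset.Ioc 0 M).filter
        (fun n => ∀ p : ℕ, p.Prime → p ∣ n → z < p)).card : ℝ)) ≤ (M : ℝ) := by
      have h1 := Finset.card_filter_le (Finset.Ioc 0 M)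
        (fun n => ∀ p : ℕ, p.Prime → p ∣ n → z < (p:ℝ))
      have h2 : (Finset.Ioc 0 M).card = M := by rw [Nat.card_Ioc]; omega
      exact_mod_cast le_trans h1 (le_of_eq h2)
    have hlog16 : Real.log z ≤ 16 := by
      calc Real.log z ≤ Real.log (2 ^ 16) := Real.log_le_log hz0 hzsmall
        _ = 16 * Real.log 2 := by
            rw [show ((2:ℝ) ^ 16) = (2:ℝ) ^ (16:ℕ) by norm_num, Real.log_pow]
            push_cast; ring
        _ ≤ 16 := by nlinarith [Real.log_two_lt_d9]
    calc ((((Finset.Ioc 0 M).filter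
        (fun n => ∀ p : ℕ, p.Prime → p ∣ n → z < p)).card : ℝ))
        ≤ (M : ℝ) := hcard
      _ ≤ x := hMx
      _ ≤ 64 * x / Real.log z := by
          rw [le_div_iff₀ hlogz]
          nlinarith
  · push_neg at hzsmall
    set R : ℝ := min z (x ^ (8:ℝ)⁻¹) with hR
    set K := ⌊R⌋₊ with hK
    have hx18 : z ^ ((8:ℝ)⁻¹) ≤ x ^ ((8:ℝ)⁻¹) := Real.rpow_le_rpow (le_of_lt hz0) hzx (by norm_num)
    have hz18 : (4:ℝ) ≤ z ^ ((8:ℝ)⁻¹) := by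
      have h4 : ((4:ℝ) ^ (8:ℕ)) ≤ z := by norm_num; nlinarith
      calc (4:ℝ) = (((4:ℝ) ^ (8:ℕ)) ^ (((8:ℕ):ℝ))⁻¹) :=
            (Real.pow_rpow_inv_natCast (by norm_num) (by norm_num)).symm
        _ ≤ z ^ (((8:ℕ):ℝ))⁻¹ :=
            Real.rpow_le_rpow (by positivity) h4 (by positivity)
        _ = z ^ ((8:ℝ)⁻¹) := by norm_num
    have hz4 : (4:ℝ) ≤ z := by nlinarith
    have hR4 : (4:ℝ) ≤ R := le_min hz4 (le_trans hz18 hx18)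
    have hKR : (K : ℝ) ≤ R := Nat.floor_le (by linarith)
    have hRK : R < (K : ℝ) + 1 := Nat.lt_floor_add_one R
    have hK1 : 1 ≤ K := by
      have : ((1:ℕ) : ℝ) ≤ R := by push_cast; linarith
      exact Nat.le_floor this
    have hKz : (K : ℝ) ≤ z := le_trans hKR (min_le_left _ _)
    have hKpos : (0:ℝ) < (K : ℝ) := by
      have : (1:ℝ) ≤ (K:ℝ) := by exact_mod_cast hK1
      linarith
    have hbound := Stmt13.sieve_bound K M hK1 x z hMx hxM hKz
    -- lower bound on log K
    have hlogzx : Real.log z ≤ Real.log x := Real.log_le_log hz0 hzx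
    have hlog2z : 16 * Real.log 2 ≤ Real.log z := by
      have h1 : Real.log ((2:ℝ) ^ (16:ℕ)) ≤ Real.log z := Real.log_le_log (by positivity)
        (by push_cast; linarith)
      rwa [Real.log_pow, Nat.cast_ofNat] at h1
    have hlogK : Real.log z / 16 ≤ Real.log K := by
      have h1 : (8:ℝ)⁻¹ * Real.log z ≤ Real.log R := by
        have hmin : z ^ ((8:ℝ)⁻¹) ≤ R := by
          refine le_min ?_ hx18
          calc z ^ ((8:ℝ)⁻¹) ≤ z ^ (1:ℝ) :=
                Real.rpow_le_rpow_of_exponent_le (by linarith) (by norm_num)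
            _ = z := Real.rpow_one z
        calc (8:ℝ)⁻¹ * Real.log z = Real.log (z ^ ((8:ℝ)⁻¹)) := (Real.log_rpow hz0 _).symm
          _ ≤ Real.log R := Real.log_le_log (by positivity) hmin
      have h2 : Real.log R - Real.log 2 ≤ Real.log K := by
        have hK2 : R / 2 ≤ (K : ℝ) := by linarith
        calc Real.log R - Real.log 2 = Real.log (R / 2) :=
              (Real.log_div (by linarith) (by norm_num)).symm
          _ ≤ Real.log K := Real.log_le_log (by linarith) hK2
      have hlog2 : Real.log 2 ≤ Real.log z / 16 := by linarith
      linarith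
    have hG : Real.log z / 32 ≤ Stmt13.G K := by
      have h1 := Stmt13.log_le_two_G hK1
      linarith
    have hGpos := Stmt13.G_pos hK1
    have hxG : x / Stmt13.G K ≤ 32 * x / Real.log z := by
      rw [div_le_div_iff₀ hGpos hlogz]
      nlinarith
    have hK4 : 2 * (K : ℝ) ^ 4 ≤ 4 * x / Real.log z := by
      have hK18 : (K : ℝ) ≤ x ^ ((8:ℝ)⁻¹) := le_trans hKR (min_le_right _ _)
      have h5 : (K : ℝ) ^ 4 ≤ x ^ ((2:ℝ)⁻¹) := by
        calc (K : ℝ) ^ 4 ≤ (x ^ ((8:ℝ)⁻¹)) ^ (4:ℕ) :=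
              pow_le_pow_left₀ (by positivity) hK18 4
          _ = x ^ ((8:ℝ)⁻¹ * 4) := by
              rw [← Real.rpow_natCast (x ^ ((8:ℝ)⁻¹)) 4, ← Real.rpow_mul hx0]
              norm_num
          _ = x ^ ((2:ℝ)⁻¹) := by norm_num
      have h6 : Real.log z ≤ 2 * x ^ ((2:ℝ)⁻¹) := by
        have h7 : Real.log x = 2 * Real.log (x ^ ((2:ℝ)⁻¹)) := by
          rw [Real.log_rpow (by linarith)]; ring
        have h8 : Real.log (x ^ ((2:ℝ)⁻¹)) ≤ x ^ ((2:ℝ)⁻¹) :=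
          le_trans (Real.log_le_sub_one_of_pos (by positivity)) (by linarith)
        linarith
      have h9 : x ^ ((2:ℝ)⁻¹) * x ^ ((2:ℝ)⁻¹) = x := by
        rw [← Real.rpow_add (by linarith)]
        norm_num
      rw [le_div_iff₀ hlogz]
      have hx12 : (0:ℝ) ≤ x ^ ((2:ℝ)⁻¹) := Real.rpow_nonneg hx0 _
      have h10 : (K : ℝ) ^ 4 * Real.log z ≤ x ^ ((2:ℝ)⁻¹) * (2 * x ^ ((2:ℝ)⁻¹)) :=
        mul_le_mul h5 h6 hlogz.le hx12
      have h11 : x ^ ((2:ℝ)⁻¹) * (2 * x ^ ((2:ℝ)⁻¹)) = 2 * x := by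
        rw [show x ^ ((2:ℝ)⁻¹) * (2 * x ^ ((2:ℝ)⁻¹))
            = 2 * (x ^ ((2:ℝ)⁻¹) * x ^ ((2:ℝ)⁻¹)) from by ring, h9]
      linarith
    calc ((((Finset.Ioc 0 M).filter
        (fun n => ∀ p : ℕ, p.Prime → p ∣ n → z < p)).card : ℝ))
        ≤ x / Stmt13.G K + 2 * (K : ℝ) ^ 4 := hbound
      _ ≤ 32 * x / Real.log z + 4 * x / Real.log z := add_le_add hxG hK4
      _ = 36 * x / Real.log z := by ring
      _ ≤ 64 * x / Real.log z := by
          rw [div_le_div_iff₀ hlogz hlogz]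
          nlinarith
end

section
/- Let k ≥ 2, ρ = (k+1)^{1/k}, v = ⌊log log y₁ / log ρ⌋ for y₁ ≥ 16, and for a given squarefree a = b·p₁⋯p_r with P⁺(b) ≤ k < p₁ < ⋯ < p_r, one has L^(k+1)(a) ≤ τ_{k+1}(b) · min_{0 ≤ s ≤ r} (k+1)^{r−s}·(log(p₁⋯p_s) + log 2)^k. -/
theorem stmt_17 (k : ℕ) (hk : 2 ≤ k) (y₁ : ℝ) (hy : 16 ≤ y₁)
    (r : ℕ) (b : ℕ) (hb : 0 < b) (hbk : ∀ p : ℕ, p.Prime → p ∣ b → p ≤ k)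
    (p : Fin r → ℕ) (hp : ∀ i, (p i).Prime) (hmono : StrictMono p)
    (hkp : ∀ i, k < p i) (hsq : Squarefree (b * ∏ i, p i)) :
    ∀ s : ℕ, s ≤ r →
      Lk k (b * ∏ i, p i) ≤ (tauk k b : ℝ) * ((k : ℝ) + 1) ^ (r - s) *
        (Real.log ((∏ i ∈ Finset.univ.filter fun i : Fin r => (i : ℕ) < s, p i : ℕ) : ℝ)
          + Real.log 2) ^ k := by
  intro s hs
  classical
  have hppos : ∀ i, 0 < p i := fun i => (hp i).pos
  have ha : 0 < b * ∏ i, p i := Nat.mul_pos hb (Finset.prod_pos fun i _ => hppos i)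
  set P : ℕ := ∏ i ∈ Finset.univ.filter fun i : Fin r => (i : ℕ) < s, p i with hP_def
  have hP1 : 1 ≤ P := Finset.one_le_prod' fun i _ => (hppos i)
  have hPr : (1:ℝ) ≤ (P:ℝ) := by exact_mod_cast hP1
  have hlogP : 0 ≤ Real.log P + Real.log 2 := by
    have h1 := Real.log_nonneg hPr
    have h2 := Real.log_nonneg (by norm_num : (1:ℝ) ≤ 2)
    linarith
  set E : Finset (Fin k → ℕ) :=
    (Fintype.piFinset fun _ : Fin k => b.divisors).filter (fun d => (∏ i, d i) ∣ b)
    with hE_def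
  set Φ : Finset (Fin r → Option (Fin k)) :=
    Finset.univ.filter (fun φ => ∀ j : Fin r, (j : ℕ) < s → φ j = none) with hΦ_def
  have hEcard : E.card = tauk k b := rfl
  -- cardinality of Φ
  have hΦcard : Φ.card ≤ (k + 1) ^ (r - s) := by
    have hle : Φ.card ≤ (Finset.univ : Finset (Fin (r - s) → Option (Fin k))).card := by
      apply Finset.card_le_card_of_injOn
        (fun φ (t : Fin (r - s)) => φ ⟨s + (t : ℕ), by have := t.isLt; omega⟩)
      · intro _ _; exact Finset.mem_univ _
      · intro φ₁ h1 φ₂ h2 hf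
        simp only [hΦ_def, Finset.coe_filter, Set.mem_setOf_eq, Finset.mem_univ,
          true_and] at h1 h2
        funext j
        by_cases hj : (j : ℕ) < s
        · rw [h1 j hj, h2 j hj]
        · have hjs : s ≤ (j : ℕ) := le_of_not_gt hj
          have ht : (j : ℕ) - s < r - s := by omega
          have hje : (⟨s + (((⟨(j : ℕ) - s, ht⟩ : Fin (r - s))) : ℕ), by omega⟩ : Fin r) = j := by
            apply Fin.ext; simp; omega
          have := congrFun hf ⟨(j : ℕ) - s, ht⟩
          simpa [hje] using this
    calc Φ.card ≤ Fintype.card (Fin (r - s) → Option (Fin k)) := by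
          simpa using hle
      _ = (k + 1) ^ (r - s) := by
          simp [Fintype.card_fun]
  -- the m-function
  set mf : (Fin r → Option (Fin k)) → Fin k → ℕ := fun φ i =>
    ∏ j ∈ Finset.univ.filter (fun j => φ j = some i), p j with hmf_def
  have hmfpos : ∀ φ i, 0 < mf φ i := fun φ i =>
    Finset.prod_pos fun j _ => hppos j
  -- the big boxes
  set B : (Fin k → ℕ) → (Fin r → Option (Fin k)) → Set (Fin k → ℝ) := fun e φ =>
    Set.univ.pi fun i => Set.Ico (Real.log (((e i * mf φ i : ℕ) : ℝ) / 2))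
      (Real.log ((e i * mf φ i * P : ℕ) : ℝ)) with hB_def
  -- volume of each big box
  have hvol : ∀ e ∈ E, ∀ φ : Fin r → Option (Fin k),
      MeasureTheory.volume (B e φ)
        = ENNReal.ofReal ((Real.log P + Real.log 2) ^ k) := by
    intro e he φ
    have hepos : ∀ i, 0 < e i := by
      intro i
      simp only [hE_def, Finset.mem_filter, Fintype.mem_piFinset] at he
      exact Nat.pos_of_mem_divisors (he.1 i)
    have hvol1 : ∀ i : Fin k,
        MeasureTheory.volume (Set.Ico (Real.log (((e i * mf φ i : ℕ) : ℝ) / 2))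
          (Real.log ((e i * mf φ i * P : ℕ) : ℝ)))
          = ENNReal.ofReal (Real.log P + Real.log 2) := by
      intro i
      rw [Real.volume_Ico]
      congr 1
      have hc : (0:ℝ) < ((e i * mf φ i : ℕ) : ℝ) := by
        exact_mod_cast Nat.mul_pos (hepos i) (hmfpos φ i)
      have hPpos : (0:ℝ) < (P:ℝ) := lt_of_lt_of_le one_pos hPr
      have he' : (0:ℝ) < ((e i : ℕ) : ℝ) := by exact_mod_cast hepos i
      have hm' : (0:ℝ) < ((mf φ i : ℕ) : ℝ) := by exact_mod_cast hmfpos φ i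
      have hP' : (0:ℝ) < ((P : ℕ) : ℝ) := lt_of_lt_of_le one_pos hPr
      have hem0 : ((e i : ℕ) : ℝ) * ((mf φ i : ℕ) : ℝ) ≠ 0 := ne_of_gt (mul_pos he' hm')
      push_cast
      rw [Real.log_mul hem0 (ne_of_gt hP'), Real.log_div hem0 (by norm_num)]
      ring
    rw [hB_def]
    rw [MeasureTheory.volume_pi_pi]
    rw [Finset.prod_congr rfl fun i _ => hvol1 i]
    rw [Finset.prod_const, Finset.card_univ, Fintype.card_fin,
      ← ENNReal.ofReal_pow hlogP]
  -- the covering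
  have hsub : (⋃ d ∈ {d : Fin k → ℕ | (∏ i, d i) ∣ b * ∏ i, p i},
      Set.univ.pi fun i => Set.Ico (Real.log ((d i : ℝ) / 2)) (Real.log (d i)))
      ⊆ ⋃ e ∈ E, ⋃ φ ∈ Φ, B e φ := by
    intro x hx
    simp only [Set.mem_iUnion, Set.mem_setOf_eq] at hx
    obtain ⟨d, hd, hxd⟩ := hx
    have hd' : ∀ i, d i ∣ b * ∏ t, p t :=
      fun i => (Finset.dvd_prod_of_mem d (Finset.mem_univ i)).trans hd
    have hdpos : ∀ i, 0 < d i := fun i => Nat.pos_of_dvd_of_pos (hd' i) ha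
    have hdsq : ∀ i, Squarefree (d i) := fun i => hsq.squarefree_of_dvd (hd' i)
    have hcop : ∀ i j : Fin k, i ≠ j → Nat.Coprime (d i) (d j) := by
      intro i j hij
      have hdd : d i * d j ∣ ∏ t, d t := by
        rw [← Finset.prod_pair hij]
        exact Finset.prod_dvd_prod_of_subset _ _ _ (Finset.subset_univ _)
      exact Nat.coprime_of_squarefree_mul (hsq.squarefree_of_dvd (hdd.trans hd))
    set e : Fin k → ℕ := fun i => Nat.gcd (d i) b with he_def
    have heb : ∀ i, e i ∣ b := fun i => Nat.gcd_dvd_right _ _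
    have hed : ∀ i, e i ∣ d i := fun i => Nat.gcd_dvd_left _ _
    have heE : e ∈ E := by
      simp only [hE_def, Finset.mem_filter, Fintype.mem_piFinset, Nat.mem_divisors]
      refine ⟨fun i => ⟨heb i, hb.ne'⟩, ?_⟩
      refine Fintype.prod_dvd_of_isRelPrime ?_ heb
      intro i j hij
      exact Nat.coprime_iff_isRelPrime.mp
        (Nat.Coprime.coprime_dvd_right (hed j)
          (Nat.Coprime.coprime_dvd_left (hed i) (hcop i j hij)))
    set φ : Fin r → Option (Fin k) := fun j =>
      if h : s ≤ (j : ℕ) ∧ ∃ i, p j ∣ d i then some h.2.choose else none with hφ_def2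
    have hφΦ : φ ∈ Φ := by
      simp only [hΦ_def, Finset.mem_filter, Finset.mem_univ, true_and]
      intro j hj
      simp only [hφ_def2]
      rw [dif_neg]
      exact fun h => absurd h.1 (by omega)
    have hφ_some : ∀ j i, φ j = some i → s ≤ (j : ℕ) ∧ p j ∣ d i := by
      intro j i hji
      simp only [hφ_def2] at hji
      by_cases h : s ≤ (j : ℕ) ∧ ∃ i, p j ∣ d i
      · rw [dif_pos h] at hji
        obtain rfl : h.2.choose = i := Option.some_injective _ hji
        exact ⟨h.1, h.2.choose_spec⟩
      · rw [dif_neg h] at hji; exact absurd hji (by simp)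
    have hφ_eq : ∀ (j : Fin r) (i : Fin k), s ≤ (j : ℕ) → p j ∣ d i → φ j = some i := by
      intro j i hsj hpd
      have h : s ≤ (j : ℕ) ∧ ∃ i, p j ∣ d i := ⟨hsj, ⟨i, hpd⟩⟩
      simp only [hφ_def2]
      rw [dif_pos h]
      congr 1
      by_contra hne
      have h1 : p j ∣ d h.2.choose := h.2.choose_spec
      have hcoc : Nat.Coprime (p j) (d i) :=
        Nat.Coprime.coprime_dvd_left h1 (hcop _ _ hne)
      have := hcoc.eq_one_of_dvd hpd
      exact (hp j).one_lt.ne' this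
    have hm_dvd : ∀ i, mf φ i ∣ d i := by
      intro i
      refine Finset.prod_dvd_of_isRelPrime ?_ ?_
      · intro j hj j' hj' hne
        exact Nat.coprime_iff_isRelPrime.mp
          ((Nat.coprime_primes (hp j) (hp j')).mpr fun h => hne (hmono.injective h))
      · intro j hj
        simp only [Finset.mem_filter] at hj
        exact (hφ_some j i hj.2).2
    have hcop_em : ∀ i, Nat.Coprime (e i) (mf φ i) := by
      intro i
      apply Nat.Coprime.prod_right
      intro j hj
      have hpb : ¬ p j ∣ b := fun hdvd => absurd (hbk _ (hp j) hdvd) (not_le.mpr (hkp j))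
      have hcb : Nat.Coprime (p j) b := ((hp j).coprime_iff_not_dvd).mpr hpb
      exact Nat.Coprime.coprime_dvd_left (heb i) hcb.symm
    have hem_dvd : ∀ i, e i * mf φ i ∣ d i :=
      fun i => (hcop_em i).mul_dvd_of_dvd_of_dvd (hed i) (hm_dvd i)
    have hd_dvd : ∀ i, d i ∣ e i * mf φ i * P := by
      intro i
      have hrw : d i = ∏ q ∈ (d i).primeFactors, q :=
        (Nat.prod_primeFactors_of_squarefree (hdsq i)).symm
      rw [hrw]
      refine Finset.prod_dvd_of_isRelPrime ?_ ?_
      · intro q hq q' hq' hne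
        exact Nat.coprime_iff_isRelPrime.mp
          ((Nat.coprime_primes (Nat.prime_of_mem_primeFactors hq)
            (Nat.prime_of_mem_primeFactors hq')).mpr hne)
      · intro q hq
        have hqp : q.Prime := Nat.prime_of_mem_primeFactors hq
        have hqd : q ∣ d i := Nat.dvd_of_mem_primeFactors hq
        have hqa : q ∣ b * ∏ t, p t := hqd.trans (hd' i)
        rcases (Nat.Prime.dvd_mul hqp).mp hqa with hqb | hqP
        · exact dvd_mul_of_dvd_left (dvd_mul_of_dvd_left (Nat.dvd_gcd hqd hqb) _) _
        · obtain ⟨j, _, hqj⟩ := hqp.prime.exists_mem_finset_dvd hqP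
          have hqej : q = p j := (Nat.prime_dvd_prime_iff_eq hqp (hp j)).mp hqj
          subst hqej
          by_cases hjs : (j : ℕ) < s
          · refine dvd_mul_of_dvd_right ?_ _
            rw [hP_def]
            exact Finset.dvd_prod_of_mem _ (by simp [hjs])
          · have hφj : φ j = some i := hφ_eq j i (le_of_not_gt hjs) hqd
            have hpm : p j ∣ mf φ i := by
              rw [hmf_def]
              exact Finset.dvd_prod_of_mem _ (by simp [hφj])
            exact dvd_mul_of_dvd_left (dvd_mul_of_dvd_right hpm _) _
    refine Set.mem_iUnion₂.mpr ⟨e, heE, Set.mem_iUnion₂.mpr ⟨φ, hφΦ, ?_⟩⟩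
    intro i _
    obtain ⟨hx1, hx2⟩ := hxd i (Set.mem_univ i)
    have hempos : 0 < e i * mf φ i :=
      Nat.mul_pos (Nat.gcd_pos_of_pos_right _ hb) (hmfpos φ i)
    have hle1 : (e i * mf φ i : ℕ) ≤ d i := Nat.le_of_dvd (hdpos i) (hem_dvd i)
    have hle2 : d i ≤ e i * mf φ i * P :=
      Nat.le_of_dvd (Nat.mul_pos hempos (lt_of_lt_of_le one_pos hP1)) (hd_dvd i)
    have hcr : (0:ℝ) < ((e i * mf φ i : ℕ) : ℝ) := by exact_mod_cast hempos
    constructor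
    · refine le_trans (Real.log_le_log (by positivity) ?_) hx1
      have : ((e i * mf φ i : ℕ) : ℝ) ≤ (d i : ℝ) := by exact_mod_cast hle1
      linarith
    · refine lt_of_lt_of_le hx2 (Real.log_le_log ?_ ?_)
      · exact_mod_cast hdpos i
      · exact_mod_cast hle2
  -- measure estimate
  have hmeas : MeasureTheory.volume (⋃ d ∈ {d : Fin k → ℕ | (∏ i, d i) ∣ b * ∏ i, p i},
      Set.univ.pi fun i => Set.Ico (Real.log ((d i : ℝ) / 2)) (Real.log (d i)))
      ≤ ((E.card * Φ.card : ℕ) : ENNReal)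
        * ENNReal.ofReal ((Real.log P + Real.log 2) ^ k) := by
    refine (MeasureTheory.measure_mono hsub).trans ?_
    refine (MeasureTheory.measure_biUnion_finset_le E _).trans ?_
    calc ∑ e ∈ E, MeasureTheory.volume (⋃ φ ∈ Φ, B e φ)
        ≤ ∑ e ∈ E, ∑ φ ∈ Φ, MeasureTheory.volume (B e φ) :=
          Finset.sum_le_sum fun e _ => MeasureTheory.measure_biUnion_finset_le Φ _
      _ = ∑ e ∈ E, ∑ _φ ∈ Φ, ENNReal.ofReal ((Real.log P + Real.log 2) ^ k) := by
          refine Finset.sum_congr rfl fun e he => Finset.sum_congr rfl fun φ _ => ?_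
          exact hvol e he φ
      _ = ((E.card * Φ.card : ℕ) : ENNReal)
            * ENNReal.ofReal ((Real.log P + Real.log 2) ^ k) := by
          simp [Finset.sum_const, mul_assoc, mul_comm, mul_left_comm]
  have hRfin : ((E.card * Φ.card : ℕ) : ENNReal)
      * ENNReal.ofReal ((Real.log P + Real.log 2) ^ k) ≠ ⊤ := by
    exact ENNReal.mul_ne_top (ENNReal.natCast_ne_top _) ENNReal.ofReal_ne_top
  have hmain := ENNReal.toReal_mono hRfin hmeas
  rw [ENNReal.toReal_mul, ENNReal.toReal_natCast,
    ENNReal.toReal_ofReal (pow_nonneg hlogP k)] at hmain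
  have hLk : Lk k (b * ∏ i, p i)
      ≤ ((E.card * Φ.card : ℕ) : ℝ) * (Real.log P + Real.log 2) ^ k := hmain
  refine hLk.trans ?_
  have hpowpos : (0:ℝ) ≤ (Real.log P + Real.log 2) ^ k := pow_nonneg hlogP k
  have hcard : ((E.card * Φ.card : ℕ) : ℝ) ≤ (tauk k b : ℝ) * ((k : ℝ) + 1) ^ (r - s) := by
    have : (E.card * Φ.card : ℕ) ≤ tauk k b * (k + 1) ^ (r - s) := by
      rw [hEcard]
      exact Nat.mul_le_mul_left _ hΦcard
    calc ((E.card * Φ.card : ℕ) : ℝ) ≤ ((tauk k b * (k + 1) ^ (r - s) : ℕ) : ℝ) := by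
          exact_mod_cast this
      _ = (tauk k b : ℝ) * ((k : ℝ) + 1) ^ (r - s) := by push_cast; ring
  exact mul_le_mul_of_nonneg_right hcard hpowpos
end

section
/- Let P ∈ (1, ∞) and let 𝒜 be a finite set of positive integers. Then ∑_{a∈𝒜} τ_{k+1}(a)/a ≤ ((log 2)^{−k} ∑_{a∈𝒜} L^(k+1)(a)/a)^{1−1/P} · (∑_{a∈𝒜} W^P_{k+1}(a)/a)^{1/P}, where W^P_{k+1}(a) = ∑_{d₁⋯d_k | a} |{(d′₁,…,d′_k) : d′₁⋯d′_k | a, |log(d′ᵢ/dᵢ)| < log 2 for all i}|^{P−1}. -/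
open MeasureTheory
open scoped ENNReal

/-- `W^P_{k+1}(a) = ∑_{d₁⋯d_k ∣ a} |{d' : d'₁⋯d'_k ∣ a, |log(d'ᵢ/dᵢ)| < log 2 ∀i}|^{P-1}` -/
noncomputable def Wk (P : ℝ) (k a : ℕ) : ℝ :=
  ∑ d ∈ (Fintype.piFinset fun _ : Fin k => a.divisors).filter fun d => (∏ i, d i) ∣ a,
    (({e : Fin k → ℕ | (∏ i, e i) ∣ a ∧
        ∀ i, |Real.log ((e i : ℝ) / (d i : ℝ))| < Real.log 2}.ncard : ℝ)) ^ (P - 1)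

lemma wk_nonneg (P : ℝ) (k a : ℕ) : 0 ≤ Wk P k a :=
  Finset.sum_nonneg fun d _ => Real.rpow_nonneg (by positivity) _

lemma lk_nonneg (k a : ℕ) : 0 ≤ Lk k a := ENNReal.toReal_nonneg

lemma key (k : ℕ) (P : ℝ) (hP : 1 < P) (a : ℕ) (ha : 0 < a) :
    (tauk k a : ℝ) * Real.log 2 ^ k ≤
      (Real.log 2 ^ k * Wk P k a) ^ (1 / P) * Lk k a ^ (1 - 1 / P) := by
  classical
  have hlog2 : (0:ℝ) < Real.log 2 := Real.log_pos (by norm_num)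
  set q : ℝ := P / (P - 1) with hq
  have hpq : P.HolderConjugate q := Real.HolderConjugate.conjExponent hP
  set D := (Fintype.piFinset fun _ : Fin k => a.divisors).filter fun d => (∏ i, d i) ∣ a with hD
  set B : (Fin k → ℕ) → Set (Fin k → ℝ) := fun d =>
    Set.univ.pi fun i => Set.Ico (Real.log ((d i : ℝ) / 2)) (Real.log (d i)) with hB
  have hBm : ∀ d, MeasurableSet (B d) := fun d =>
    MeasurableSet.univ_pi fun i => measurableSet_Ico
  have hmemD : ∀ d : Fin k → ℕ, d ∈ D ↔ (∏ i, d i) ∣ a := by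
    intro d
    constructor
    · exact fun h => (Finset.mem_filter.1 h).2
    · intro h
      exact Finset.mem_filter.2 ⟨Fintype.mem_piFinset.2 fun i => Nat.mem_divisors.2
        ⟨dvd_trans (Finset.dvd_prod_of_mem d (Finset.mem_univ i)) h, ha.ne'⟩, h⟩
  have hdpos : ∀ d ∈ D, ∀ i, (0:ℝ) < d i := by
    intro d hd i
    have := Nat.pos_of_mem_divisors (Fintype.mem_piFinset.1 (Finset.mem_filter.1 hd).1 i)
    exact_mod_cast this
  set c : ℝ≥0∞ := ENNReal.ofReal (Real.log 2) with hc
  have hvolB : ∀ d ∈ D, volume (B d) = c ^ k := by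
    intro d hd
    rw [hB]
    simp only []
    rw [volume_pi_pi]
    have h1 : ∀ i, volume (Set.Ico (Real.log ((d i:ℝ)/2)) (Real.log (d i))) = c := by
      intro i
      rw [Real.volume_Ico, Real.log_div (hdpos d hd i).ne' two_ne_zero]
      ring_nf
      exact hc.symm
    simp [h1]
  set f : (Fin k → ℝ) → ℝ≥0∞ := fun u => ∑ d ∈ D, (B d).indicator 1 u with hf
  have hfm : Measurable f := Finset.measurable_sum _ fun d _ => measurable_one.indicator (hBm d)
  have hint_f : ∫⁻ u, f u = (tauk k a : ℝ≥0∞) * c ^ k := by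
    rw [hf]
    rw [lintegral_finset_sum _ fun d _ => measurable_one.indicator (hBm d)]
    rw [Finset.sum_congr rfl fun d hd => by
      rw [lintegral_indicator_one (hBm d), hvolB d hd]]
    rw [Finset.sum_const, nsmul_eq_mul]
    rfl
  set S : Set (Fin k → ℝ) := ⋃ d ∈ D, B d with hS
  have hSm : MeasurableSet S := Finset.measurableSet_biUnion D fun d _ => hBm d
  have hLk : Lk k a = (volume S).toReal := by
    have hset : {d : Fin k → ℕ | (∏ i, d i) ∣ a} = ↑D := Set.ext fun d => by
      simp [hmemD d]
    rw [Lk, hset, Finset.set_biUnion_coe]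
  have hSfin : volume S ≠ ⊤ := by
    refine ne_top_of_le_ne_top ?_ (measure_biUnion_finset_le D B)
    rw [Finset.sum_congr rfl hvolB, Finset.sum_const, nsmul_eq_mul]
    exact ENNReal.mul_ne_top (ENNReal.natCast_ne_top _)
      (ENNReal.pow_ne_top ENNReal.ofReal_ne_top)
  have hq0 : (0:ℝ) < q := hpq.symm.pos
  have hfg : ∀ u, f u = (f * S.indicator (1 : (Fin k → ℝ) → ℝ≥0∞)) u := by
    intro u
    by_cases hu : u ∈ S
    · simp [Set.indicator_of_mem hu]
    · have h0 : f u = 0 := Finset.sum_eq_zero fun d hd =>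
        Set.indicator_of_notMem (fun hB' => hu (Set.mem_biUnion hd hB')) _
      simp [h0]
  have hholder := ENNReal.lintegral_mul_le_Lp_mul_Lq volume hpq hfm.aemeasurable
      (measurable_one.indicator hSm).aemeasurable
  have hindq : ∫⁻ u, (S.indicator (1 : (Fin k → ℝ) → ℝ≥0∞) u) ^ q = volume S := by
    have h1 : ∀ u, (S.indicator (1:(Fin k → ℝ) → ℝ≥0∞) u) ^ q = S.indicator 1 u := by
      intro u
      by_cases hu : u ∈ S <;>
        simp [hu, ENNReal.one_rpow, ENNReal.zero_rpow_of_pos hq0]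
    simp_rw [h1]
    exact lintegral_indicator_one hSm
  -- counting bound
  set N : (Fin k → ℕ) → ℕ := fun d => {e : Fin k → ℕ | (∏ i, e i) ∣ a ∧
      ∀ i, |Real.log ((e i : ℝ) / (d i : ℝ))| < Real.log 2}.ncard with hN
  have hfle : ∀ d ∈ D, ∀ u ∈ B d, f u ≤ (N d : ℝ≥0∞) := by
    intro d hd u hu
    have hcard : f u = ((D.filter fun e => u ∈ B e).card : ℝ≥0∞) := by
      rw [Finset.card_filter]
      push_cast
      exact Finset.sum_congr rfl fun e _ => by by_cases h : u ∈ B e <;> simp [h]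
    rw [hcard]
    have hsub : ↑(D.filter fun e => u ∈ B e) ⊆ {e : Fin k → ℕ | (∏ i, e i) ∣ a ∧
        ∀ i, |Real.log ((e i : ℝ) / (d i : ℝ))| < Real.log 2} := by
      intro e he
      rw [Finset.mem_coe, Finset.mem_filter] at he
      obtain ⟨heD, hue⟩ := he
      refine ⟨(hmemD e).1 heD, fun i => ?_⟩
      have h1 := (Set.mem_univ_pi.1 hu) i
      have h2 := (Set.mem_univ_pi.1 hue) i
      have hd1 := hdpos d hd i
      have he1 := hdpos e heD i
      rw [Real.log_div he1.ne' hd1.ne', abs_sub_lt_iff]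
      have e2 : Real.log ((e i : ℝ)/2) = Real.log (e i) - Real.log 2 :=
        Real.log_div he1.ne' two_ne_zero
      have d2 : Real.log ((d i : ℝ)/2) = Real.log (d i) - Real.log 2 :=
        Real.log_div hd1.ne' two_ne_zero
      rw [e2] at h2
      rw [d2] at h1
      constructor <;> [linarith [h1.2, h2.1]; linarith [h1.1, h2.2]]
    have hEsub : {e : Fin k → ℕ | (∏ i, e i) ∣ a ∧
        ∀ i, |Real.log ((e i : ℝ) / (d i : ℝ))| < Real.log 2} ⊆ ↑D := by
      intro e he
      exact Finset.mem_coe.2 ((hmemD e).2 he.1)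
    have hfin : ({e : Fin k → ℕ | (∏ i, e i) ∣ a ∧
        ∀ i, |Real.log ((e i : ℝ) / (d i : ℝ))| < Real.log 2}).Finite :=
      Set.Finite.subset D.finite_toSet hEsub
    have := Set.ncard_le_ncard hsub hfin
    rw [Set.ncard_coe_finset] at this
    exact_mod_cast this
  have hP1 : (0:ℝ) < P - 1 := by linarith
  have hintfP : ∫⁻ u, f u ^ P ≤ c ^ k * ENNReal.ofReal (Wk P k a) := by
    have hsplit : ∀ u, f u ^ P = ∑ d ∈ D, (B d).indicator 1 u * f u ^ (P - 1) := by
      intro u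
      rw [← Finset.sum_mul]
      show f u ^ P = f u * f u ^ (P - 1)
      by_cases h0 : f u = 0
      · rw [h0, ENNReal.zero_rpow_of_pos (by linarith), ENNReal.zero_rpow_of_pos hP1,
          zero_mul]
      · have hfin' : f u ≠ ⊤ := by
          show (∑ d ∈ D, (B d).indicator 1 u) ≠ ⊤
          refine (ENNReal.sum_lt_top.2 fun d _ => ?_).ne
          by_cases h : u ∈ B d <;> simp [h]
        conv_lhs => rw [show P = 1 + (P - 1) by ring]
        rw [ENNReal.rpow_add _ _ h0 hfin', ENNReal.rpow_one]
    calc (∫⁻ u, f u ^ P)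
        = ∑ d ∈ D, ∫⁻ u, (B d).indicator 1 u * f u ^ (P - 1) := by
          simp_rw [hsplit]
          exact lintegral_finset_sum _ fun d _ =>
            (measurable_one.indicator (hBm d)).mul (hfm.pow_const _)
      _ ≤ ∑ d ∈ D, (N d : ℝ≥0∞) ^ (P - 1) * c ^ k := by
          refine Finset.sum_le_sum fun d hd => ?_
          have hind : ∀ u, (B d).indicator (1:(Fin k → ℝ)→ℝ≥0∞) u * f u ^ (P-1)
              = (B d).indicator (fun u => f u ^ (P-1)) u := by
            intro u; by_cases h : u ∈ B d <;> simp [h]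
          calc ∫⁻ u, (B d).indicator 1 u * f u ^ (P - 1)
              = ∫⁻ u in B d, f u ^ (P-1) := by
                simp_rw [hind]; exact lintegral_indicator (hBm d) _
            _ ≤ ∫⁻ _ in B d, (N d : ℝ≥0∞) ^ (P-1) :=
                setLIntegral_mono' (hBm d) fun u hu =>
                  ENNReal.rpow_le_rpow (hfle d hd u hu) (by linarith)
            _ = (N d : ℝ≥0∞) ^ (P-1) * volume (B d) := setLIntegral_const _ _
            _ = _ := by rw [hvolB d hd]
      _ = c ^ k * ENNReal.ofReal (Wk P k a) := by
          rw [← Finset.sum_mul, mul_comm]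
          congr 1
          have hWeq : ENNReal.ofReal (Wk P k a) = ∑ d ∈ D, (N d : ℝ≥0∞) ^ (P - 1) := by
            rw [Wk, ENNReal.ofReal_sum_of_nonneg
              (fun d _ => Real.rpow_nonneg (Nat.cast_nonneg _) _)]
            refine Finset.sum_congr rfl fun d hd => ?_
            rw [← ENNReal.ofReal_rpow_of_nonneg (Nat.cast_nonneg _) (by linarith : (0:ℝ) ≤ P - 1),
              ENNReal.ofReal_natCast]
          rw [hWeq]
  have hWnn := wk_nonneg P k a
  have main : (tauk k a : ℝ≥0∞) * c ^ k ≤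
      (c ^ k * ENNReal.ofReal (Wk P k a)) ^ (1/P) * (volume S) ^ (1/q) := by
    calc (tauk k a : ℝ≥0∞) * c ^ k = ∫⁻ u, f u := hint_f.symm
      _ = ∫⁻ u, (f * S.indicator (1 : (Fin k → ℝ) → ℝ≥0∞)) u := by simp_rw [← hfg]
      _ ≤ (∫⁻ u, f u ^ P) ^ (1/P) * (∫⁻ u, (S.indicator 1 u : ℝ≥0∞) ^ q) ^ (1/q) := hholder
      _ ≤ _ := by
          rw [hindq]
          gcongr
  have hRfin : (c ^ k * ENNReal.ofReal (Wk P k a)) ^ (1/P) * (volume S) ^ (1/q) ≠ ⊤ := by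
    apply ENNReal.mul_ne_top
    · exact ENNReal.rpow_ne_top_of_nonneg (by positivity)
        (ENNReal.mul_ne_top (ENNReal.pow_ne_top ENNReal.ofReal_ne_top) ENNReal.ofReal_ne_top)
    · exact ENNReal.rpow_ne_top_of_nonneg (by positivity) hSfin
  have hq1 : 1 / q = 1 - 1 / P := by
    rw [one_div, one_div, ← hpq.one_sub_inv]
  calc (tauk k a : ℝ) * Real.log 2 ^ k
      = ((tauk k a : ℝ≥0∞) * c ^ k).toReal := by
        rw [ENNReal.toReal_mul, ENNReal.toReal_pow, ENNReal.toReal_natCast, hc,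
          ENNReal.toReal_ofReal hlog2.le]
    _ ≤ (((c ^ k * ENNReal.ofReal (Wk P k a)) ^ (1/P) * (volume S) ^ (1/q))).toReal :=
        ENNReal.toReal_mono hRfin main
    _ = (Real.log 2 ^ k * Wk P k a) ^ (1/P) * Lk k a ^ (1 - 1/P) := by
        rw [ENNReal.toReal_mul, ← ENNReal.toReal_rpow, ← ENNReal.toReal_rpow,
          ENNReal.toReal_mul, ENNReal.toReal_pow, hc, ENNReal.toReal_ofReal hlog2.le,
          ENNReal.toReal_ofReal hWnn, hLk, hq1]

lemma key2 (k : ℕ) (P : ℝ) (hP : 1 < P) (a : ℕ) (ha : 0 < a) :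
    (tauk k a : ℝ) ≤ ((Real.log 2 ^ k)⁻¹ * Lk k a) ^ (1 - 1 / P) * Wk P k a ^ (1 / P) := by
  have hl : (0:ℝ) < Real.log 2 ^ k := pow_pos (Real.log_pos (by norm_num)) k
  have hW := wk_nonneg P k a
  have hL := lk_nonneg k a
  have h := key k P hP a ha
  rw [Real.mul_rpow hl.le hW] at h
  have h2 : (0:ℝ) < (Real.log 2 ^ k) ^ (1 - 1/P) := Real.rpow_pos_of_pos hl _
  have h3 : (Real.log 2 ^ k) ^ (1/P) * (Real.log 2 ^ k) ^ (1 - 1/P) = Real.log 2 ^ k := by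
    rw [← Real.rpow_add hl]; norm_num
  calc (tauk k a : ℝ) = (tauk k a : ℝ) * Real.log 2 ^ k / Real.log 2 ^ k := by
        field_simp
    _ ≤ ((Real.log 2 ^ k) ^ (1/P) * Wk P k a ^ (1/P) * Lk k a ^ (1 - 1/P)) / Real.log 2 ^ k :=
        (div_le_div_iff_of_pos_right hl).2 h
    _ = ((Real.log 2 ^ k)⁻¹ * Lk k a) ^ (1 - 1 / P) * Wk P k a ^ (1 / P) := by
        rw [Real.mul_rpow (inv_nonneg.2 hl.le) hL, Real.inv_rpow hl.le,
          div_eq_iff hl.ne']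
        have h4 : ((Real.log 2 ^ k) ^ (1 - 1/P))⁻¹ * (Real.log 2 ^ k) ^ (1 - 1/P) = 1 :=
          inv_mul_cancel₀ h2.ne'
        linear_combination (((Real.log 2 ^ k) ^ (1 - 1 / P))⁻¹ * Lk k a ^ (1 - 1 / P) *
            Wk P k a ^ (1 / P)) * h3 -
          ((Real.log 2 ^ k) ^ (1 / P) * Lk k a ^ (1 - 1 / P) * Wk P k a ^ (1 / P)) * h4

theorem stmt_19 (k : ℕ) (hk : 1 ≤ k) (P : ℝ) (hP : 1 < P) (A : Finset ℕ)
    (hA : ∀ a ∈ A, 0 < a) :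
    (∑ a ∈ A, (tauk k a : ℝ) / a) ≤
      (((Real.log 2) ^ k)⁻¹ * ∑ a ∈ A, Lk k a / a) ^ (1 - 1 / P) *
        (∑ a ∈ A, Wk P k a / a) ^ (1 / P) := by
  have hl : (0:ℝ) < Real.log 2 ^ k := pow_pos (Real.log_pos (by norm_num)) k
  have hpq : P.HolderConjugate (P / (P - 1)) := Real.HolderConjugate.conjExponent hP
  set q : ℝ := P / (P - 1) with hqdef
  have hq0 : 0 < q := hpq.symm.pos
  have hq1 : 1 - 1/P = 1/q := by rw [one_div, one_div, hpq.one_sub_inv]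
  set X : ℕ → ℝ := fun a => ((Real.log 2 ^ k)⁻¹ * Lk k a) / a with hX
  set Y : ℕ → ℝ := fun a => Wk P k a / a with hY
  have hXnn : ∀ a, 0 ≤ X a := fun a =>
    div_nonneg (mul_nonneg (inv_nonneg.2 hl.le) (lk_nonneg k a)) (Nat.cast_nonneg a)
  have hYnn : ∀ a, 0 ≤ Y a := fun a => div_nonneg (wk_nonneg P k a) (Nat.cast_nonneg a)
  have step1 : (∑ a ∈ A, (tauk k a : ℝ) / a) ≤
      ∑ a ∈ A, X a ^ (1 - 1/P) * Y a ^ (1/P) := by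
    refine Finset.sum_le_sum fun a haA => ?_
    have ha : (0:ℝ) < a := by exact_mod_cast hA a haA
    have hXa : 0 ≤ (Real.log 2 ^ k)⁻¹ * Lk k a :=
      mul_nonneg (inv_nonneg.2 hl.le) (lk_nonneg k a)
    have hsplit : (a:ℝ) = (a:ℝ) ^ (1 - 1/P) * (a:ℝ) ^ (1/P) := by
      rw [← Real.rpow_add ha]; norm_num
    calc (tauk k a : ℝ) / a
        ≤ (((Real.log 2 ^ k)⁻¹ * Lk k a) ^ (1 - 1/P) * Wk P k a ^ (1/P)) / a :=
          (div_le_div_iff_of_pos_right ha).2 (key2 k P hP a (hA a haA))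
      _ = X a ^ (1 - 1/P) * Y a ^ (1/P) := by
          rw [hX, hY]
          simp only []
          rw [Real.div_rpow hXa (Nat.cast_nonneg a),
            Real.div_rpow (wk_nonneg P k a) (Nat.cast_nonneg a), div_mul_div_comm,
            ← hsplit]
  have step2 : ∑ a ∈ A, X a ^ (1 - 1/P) * Y a ^ (1/P) ≤
      (∑ a ∈ A, X a) ^ (1 - 1/P) * (∑ a ∈ A, Y a) ^ (1/P) := by
    have hh := Real.inner_le_Lp_mul_Lq A (fun a => X a ^ (1 - 1/P))
      (fun a => Y a ^ (1/P)) hpq.symm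
    have e1 : ∀ a ∈ A, |X a ^ (1 - 1/P)| ^ q = X a := by
      intro a _
      rw [abs_of_nonneg (Real.rpow_nonneg (hXnn a) _), ← Real.rpow_mul (hXnn a), hq1,
        one_div, inv_mul_cancel₀ hq0.ne', Real.rpow_one]
    have e2 : ∀ a ∈ A, |Y a ^ (1/P)| ^ P = Y a := by
      intro a _
      rw [abs_of_nonneg (Real.rpow_nonneg (hYnn a) _), ← Real.rpow_mul (hYnn a),
        one_div, inv_mul_cancel₀ hpq.ne_zero, Real.rpow_one]
    rw [Finset.sum_congr rfl e1, Finset.sum_congr rfl e2, ← hq1] at hh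
    exact hh
  have hfin : ∑ a ∈ A, X a = ((Real.log 2) ^ k)⁻¹ * ∑ a ∈ A, Lk k a / a := by
    rw [Finset.mul_sum]
    exact Finset.sum_congr rfl fun a _ => mul_div_assoc _ _ _
  calc (∑ a ∈ A, (tauk k a : ℝ) / a) ≤ ∑ a ∈ A, X a ^ (1 - 1/P) * Y a ^ (1/P) := step1
    _ ≤ (∑ a ∈ A, X a) ^ (1 - 1/P) * (∑ a ∈ A, Y a) ^ (1/P) := step2
    _ = _ := by rw [hfin]
end
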